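/- arXiv:2408.06492 — 5 statements merged into one kernel-verified Lean document; each statement's English description precedes it below -/
import Mathlib

section
/- Let M be an n × n matrix over ℤ_p with nonzero determinant, and let M' be the (n+1) × n matrix obtained by appending a row vector v ∈ ℤ_p^n. Then the extension class of 0 → ℤ_p → coker(M') → coker(M) → 0 corresponds, under the bijection Ext(coker(M), ℤ_p) ≅ Hom(coker(M), ℚ_p/ℤ_p), to the homomorphism g ↦ −v·M⁻¹·g mod ℤ_p. -/
open Matrix
noncomputable section

def zpSub (p : ℕ) [Fact p.Prime] : Submodule ℤ_[p] ℚ_[p] :=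
  LinearMap.range (Algebra.linearMap ℤ_[p] ℚ_[p])

abbrev QZ (p : ℕ) [Fact p.Prime] : Type := ℚ_[p] ⧸ zpSub p

/-- The `(n+1) × n` matrix obtained from `M` by appending the row `v` at the bottom. -/
def appendRow {p : ℕ} [Fact p.Prime] {n : ℕ} (M : Matrix (Fin n) (Fin n) ℤ_[p])
    (v : Fin n → ℤ_[p]) : Matrix (Fin (n + 1)) (Fin n) ℤ_[p] :=
  fun i j => Fin.lastCases (v j) (fun i' => M i' j) i

/-- with `M` an `n×n` matrix over `ℤ_p` of nonzero determinant and `M'` obtained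
by appending the row `v`, the extension `0 → ℤ_p → coker(M') → coker(M) → 0` corresponds,
under `Ext(coker M, ℤ_p) ≅ Hom(coker M, ℚ_p/ℤ_p)`, to `g ↦ -v·M⁻¹·g mod ℤ_p`; the
correspondence is expressed via the (unique) morphism `(ψ, φ)` to the terminal extension
`0 → ℤ_p → ℚ_p → ℚ_p/ℤ_p → 0`. -/
theorem stmt3 (p : ℕ) [Fact p.Prime] (n : ℕ) (M : Matrix (Fin n) (Fin n) ℤ_[p])
    (hM : M.det ≠ 0) (v : Fin n → ℤ_[p]) :
    ∃ (φ : ((Fin n → ℤ_[p]) ⧸ LinearMap.range M.mulVecLin) →ₗ[ℤ_[p]] QZ p)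
      (π : ((Fin (n+1) → ℤ_[p]) ⧸ LinearMap.range (appendRow M v).mulVecLin) →ₗ[ℤ_[p]]
            ((Fin n → ℤ_[p]) ⧸ LinearMap.range M.mulVecLin))
      (ψ : ((Fin (n+1) → ℤ_[p]) ⧸ LinearMap.range (appendRow M v).mulVecLin) →ₗ[ℤ_[p]] ℚ_[p]),
      -- π is the canonical projection of cokernels (dropping the last coordinate)
      (∀ x : Fin (n+1) → ℤ_[p],
        π (Submodule.Quotient.mk x) = Submodule.Quotient.mk (x ∘ Fin.castSucc)) ∧
      -- ψ restricts to the identity on the `ℤ_p` factor given by the last coordinate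
      (∀ z : ℤ_[p],
        ψ (Submodule.Quotient.mk (Pi.single (Fin.last n) z)) = (z : ℚ_[p])) ∧
      -- (ψ, φ) is a morphism of extensions to the terminal one
      ((zpSub p).mkQ.comp ψ = φ.comp π) ∧
      -- and φ is explicitly `g ↦ -v·M⁻¹·g mod ℤ_p`
      (∀ g : Fin n → ℤ_[p],
        φ (Submodule.Quotient.mk g) =
          Submodule.Quotient.mk
            (-((fun j => (v j : ℚ_[p])) ⬝ᵥ
              ((M.map ((↑) : ℤ_[p] → ℚ_[p]))⁻¹.mulVec (fun j => (g j : ℚ_[p])))))) := by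
  set A : Matrix (Fin n) (Fin n) ℚ_[p] := M.map ((↑) : ℤ_[p] → ℚ_[p]) with hA
  have hAdet : IsUnit A.det := by
    rw [isUnit_iff_ne_zero, hA]
    have h := RingHom.map_det PadicInt.Coe.ringHom M
    rw [show (PadicInt.Coe.ringHom.mapMatrix M : Matrix (Fin n) (Fin n) ℚ_[p])
        = M.map ((↑) : ℤ_[p] → ℚ_[p]) from rfl] at h
    rw [← h]
    intro h0
    exact hM (Subtype.coe_injective h0)
  -- coordinatewise inclusion
  set e : (Fin n → ℤ_[p]) →ₗ[ℤ_[p]] (Fin n → ℚ_[p]) :=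
    LinearMap.pi (fun j => (Algebra.linearMap ℤ_[p] ℚ_[p]).comp (LinearMap.proj j)) with he
  have he_apply : ∀ (x : Fin n → ℤ_[p]) (j : Fin n), e x j = (x j : ℚ_[p]) := fun _ _ => rfl
  -- the ℚ_p-linear map g ↦ -(v ⬝ A⁻¹ g)
  set L : (Fin n → ℚ_[p]) →ₗ[ℚ_[p]] ℚ_[p] :=
    { toFun := fun g => -((fun j => (v j : ℚ_[p])) ⬝ᵥ (A⁻¹.mulVec g))
      map_add' := fun x y => by simp only [Matrix.mulVec_add, dotProduct_add, neg_add]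
      map_smul' := fun c x => by simp [Matrix.mulVec_smul, dotProduct_smul] } with hL
  set F : (Fin n → ℤ_[p]) →ₗ[ℤ_[p]] ℚ_[p] := (L.restrictScalars ℤ_[p]).comp e with hF
  have hemul : ∀ u : Fin n → ℤ_[p], e (M.mulVec u) = A.mulVec (e u) := by
    intro u; funext j
    simp only [he_apply, hA, Matrix.mulVec, dotProduct, Matrix.map_apply]
    rw [show ((∑ k, M j k * u k : ℤ_[p]) : ℚ_[p]) = PadicInt.Coe.ringHom (∑ k, M j k * u k)
        from rfl, map_sum]
    refine Finset.sum_congr rfl fun k _ => ?_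
    rfl
  have hinv : ∀ w : Fin n → ℚ_[p], A⁻¹.mulVec (A.mulVec w) = w := by
    intro w
    rw [Matrix.mulVec_mulVec, Matrix.nonsing_inv_mul A hAdet, Matrix.one_mulVec]
  have hFM : ∀ u : Fin n → ℤ_[p], F (M.mulVec u) = -((v ⬝ᵥ u : ℤ_[p]) : ℚ_[p]) := by
    intro u
    show -((fun j => (v j : ℚ_[p])) ⬝ᵥ (A⁻¹.mulVec (e (M.mulVec u)))) = _
    rw [hemul, hinv]
    congr 1
    simp only [dotProduct, he_apply]
    rw [show ((∑ k, v k * u k : ℤ_[p]) : ℚ_[p]) = PadicInt.Coe.ringHom (∑ k, v k * u k)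
        from rfl, map_sum]
    refine Finset.sum_congr rfl fun k _ => ?_
    rfl
  -- φ
  have hφker : LinearMap.range M.mulVecLin ≤
      LinearMap.ker ((zpSub p).mkQ.comp F) := by
    rintro _ ⟨u, rfl⟩
    simp only [LinearMap.mem_ker, LinearMap.comp_apply, Matrix.mulVecLin_apply]
    rw [hFM u, Submodule.mkQ_apply, Submodule.Quotient.mk_eq_zero]
    exact ⟨-(v ⬝ᵥ u), by simp⟩
  set φ : ((Fin n → ℤ_[p]) ⧸ LinearMap.range M.mulVecLin) →ₗ[ℤ_[p]] QZ p :=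
    Submodule.liftQ _ ((zpSub p).mkQ.comp F) hφker with hφ
  -- restriction map
  set r : (Fin (n+1) → ℤ_[p]) →ₗ[ℤ_[p]] (Fin n → ℤ_[p]) :=
    LinearMap.funLeft ℤ_[p] ℤ_[p] Fin.castSucc with hr
  have hr_apply : ∀ x : Fin (n+1) → ℤ_[p], r x = x ∘ Fin.castSucc := fun _ => rfl
  have hM'cast : ∀ u : Fin n → ℤ_[p], r ((appendRow M v).mulVec u) = M.mulVec u := by
    intro u; funext j
    simp [hr_apply, Matrix.mulVec, dotProduct, appendRow]
  have hM'last : ∀ u : Fin n → ℤ_[p], (appendRow M v).mulVec u (Fin.last n) = v ⬝ᵥ u := by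
    intro u
    simp [Matrix.mulVec, dotProduct, appendRow]
  -- π
  have hπker : LinearMap.range (appendRow M v).mulVecLin ≤
      LinearMap.ker ((LinearMap.range M.mulVecLin).mkQ.comp r) := by
    rintro _ ⟨u, rfl⟩
    simp only [LinearMap.mem_ker, LinearMap.comp_apply, Matrix.mulVecLin_apply]
    rw [hM'cast u, Submodule.mkQ_apply, Submodule.Quotient.mk_eq_zero]
    exact ⟨u, rfl⟩
  set π : ((Fin (n+1) → ℤ_[p]) ⧸ LinearMap.range (appendRow M v).mulVecLin) →ₗ[ℤ_[p]]
      ((Fin n → ℤ_[p]) ⧸ LinearMap.range M.mulVecLin) :=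
    Submodule.liftQ _ ((LinearMap.range M.mulVecLin).mkQ.comp r) hπker with hπ
  -- ψ
  set Ψ : (Fin (n+1) → ℤ_[p]) →ₗ[ℤ_[p]] ℚ_[p] :=
    (Algebra.linearMap ℤ_[p] ℚ_[p]).comp (LinearMap.proj (Fin.last n)) + F.comp r with hΨ
  have hΨ_apply : ∀ x : Fin (n+1) → ℤ_[p], Ψ x = (x (Fin.last n) : ℚ_[p]) + F (r x) :=
    fun _ => rfl
  have hψker : LinearMap.range (appendRow M v).mulVecLin ≤ LinearMap.ker Ψ := by
    rintro _ ⟨u, rfl⟩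
    simp only [LinearMap.mem_ker, Matrix.mulVecLin_apply]
    rw [hΨ_apply, hM'last u, hM'cast u, hFM u, add_neg_cancel]
  set ψ : ((Fin (n+1) → ℤ_[p]) ⧸ LinearMap.range (appendRow M v).mulVecLin) →ₗ[ℤ_[p]] ℚ_[p] :=
    Submodule.liftQ _ Ψ hψker with hψ
  refine ⟨φ, π, ψ, ?_, ?_, ?_, ?_⟩
  · intro x
    rfl
  · intro z
    show Ψ (Pi.single (Fin.last n) z) = (z : ℚ_[p])
    rw [hΨ_apply]
    have h2 : r (Pi.single (Fin.last n) z) = 0 := by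
      funext j
      rw [hr_apply]
      exact Pi.single_eq_of_ne (M := fun _ : Fin (n+1) => ℤ_[p]) (Fin.castSucc_lt_last j).ne z
    rw [h2, map_zero, add_zero, Pi.single_eq_same (M := fun _ : Fin (n+1) => ℤ_[p])]
  · apply Submodule.linearMap_qext
    refine LinearMap.ext fun x => ?_
    show (zpSub p).mkQ (Ψ x) = φ (Submodule.Quotient.mk (r x))
    have : φ (Submodule.Quotient.mk (r x)) = (zpSub p).mkQ (F (r x)) := rfl
    rw [this, Submodule.mkQ_apply, Submodule.mkQ_apply]
    rw [Submodule.Quotient.eq]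
    rw [hΨ_apply]
    have : (x (Fin.last n) : ℚ_[p]) + F (r x) - F (r x) = (x (Fin.last n) : ℚ_[p]) := by ring
    rw [this]
    exact ⟨x (Fin.last n), rfl⟩
  · intro g
    rfl
end
end

section
/- Let H be a ℤ_p-module of the form H ≅ H_tors × ℤ_p with H_tors finite. Then Aut_{ℤ_p}(H) ≅ Aut(H_tors) × Hom(ℤ_p, H_tors) × ℤ_p^× as sets, and for all sufficiently large l, the index of U_l = {α ∈ Aut(H) : α ≡ id mod p^l} in Aut(H) equals |H_tors| · |Aut(H_tors)| · |(ℤ/p^lℤ)^×|. -/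
noncomputable section

/-- `U_l`: the subgroup of automorphisms of `H` congruent to the identity mod `p^l`. -/
def Ul (p : ℕ) [Fact p.Prime] (H : Type*) [AddCommGroup H] [Module ℤ_[p] H] (l : ℕ) :
    Subgroup (H ≃ₗ[ℤ_[p]] H) where
  carrier := {α | ∀ x, ∃ y, α x - x = ((p : ℤ_[p]) ^ l) • y}
  one_mem' := by intro x; exact ⟨0, by simp⟩
  mul_mem' := by
    intro a b ha hb x
    obtain ⟨y1, e1⟩ := ha (b x)
    obtain ⟨y2, e2⟩ := hb x
    refine ⟨y1 + y2, ?_⟩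
    have h : (a * b) x - x = (a (b x) - b x) + (b x - x) := by
      have h0 : (a * b) x = a (b x) := rfl
      rw [h0]; abel
    rw [h, e1, e2, smul_add]
  inv_mem' := by
    intro a ha x
    obtain ⟨y, e⟩ := ha (a⁻¹ x)
    have h1 : a (a⁻¹ x) = x := a.apply_symm_apply x
    refine ⟨-y, ?_⟩
    have h : a⁻¹ x - x = -(a (a⁻¹ x) - a⁻¹ x) := by rw [h1]; abel
    rw [h, e, smul_neg]

namespace Stmt6Aux

variable {p : ℕ} [Fact p.Prime] {T : Type*} [AddCommGroup T] [Module ℤ_[p] T]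

theorem hom_to_padic_eq_zero [Finite T] (f : T →ₗ[ℤ_[p]] ℤ_[p]) : f = 0 := by
  ext t
  have hpos : 0 < addOrderOf t := addOrderOf_pos t
  have h1 : ((addOrderOf t : ℤ_[p])) • t = 0 := by
    rw [Nat.cast_smul_eq_nsmul]
    exact addOrderOf_nsmul_eq_zero t
  have h2 : (addOrderOf t : ℤ_[p]) * f t = 0 := by
    rw [← smul_eq_mul, ← map_smul, h1, map_zero]
  have h3 : (addOrderOf t : ℤ_[p]) ≠ 0 := Nat.cast_ne_zero.mpr hpos.ne'
  have := mul_eq_zero.mp h2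
  simp only [LinearMap.zero_apply]
  tauto

/-- the `T → T` component of an automorphism of `T × ℤ_p`. -/
def Amap (α : (T × ℤ_[p]) ≃ₗ[ℤ_[p]] (T × ℤ_[p])) : T →ₗ[ℤ_[p]] T :=
  (LinearMap.fst ℤ_[p] T ℤ_[p]) ∘ₗ α.toLinearMap ∘ₗ (LinearMap.inl ℤ_[p] T ℤ_[p])

/-- the `ℤ_p → T` component. -/
def Bmap (α : (T × ℤ_[p]) ≃ₗ[ℤ_[p]] (T × ℤ_[p])) : ℤ_[p] →ₗ[ℤ_[p]] T :=
  (LinearMap.fst ℤ_[p] T ℤ_[p]) ∘ₗ α.toLinearMap ∘ₗ (LinearMap.inr ℤ_[p] T ℤ_[p])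

/-- the `ℤ_p → ℤ_p` component, as a scalar. -/
def dv (α : (T × ℤ_[p]) ≃ₗ[ℤ_[p]] (T × ℤ_[p])) : ℤ_[p] := (α (0, 1)).2

theorem snd_inl [Finite T] (α : (T × ℤ_[p]) ≃ₗ[ℤ_[p]] (T × ℤ_[p])) (t : T) :
    (α (t, 0)).2 = 0 := by
  have h := hom_to_padic_eq_zero
    ((LinearMap.snd ℤ_[p] T ℤ_[p]) ∘ₗ α.toLinearMap ∘ₗ (LinearMap.inl ℤ_[p] T ℤ_[p]))
  have := LinearMap.ext_iff.mp h t
  simpa using this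

theorem apply_inl [Finite T] (α : (T × ℤ_[p]) ≃ₗ[ℤ_[p]] (T × ℤ_[p])) (t : T) :
    α (t, 0) = (Amap α t, 0) :=
  Prod.ext rfl (snd_inl α t)

theorem apply_inr (α : (T × ℤ_[p]) ≃ₗ[ℤ_[p]] (T × ℤ_[p])) :
    α (0, 1) = (Bmap α 1, dv α) := rfl

theorem apply_eq [Finite T] (α : (T × ℤ_[p]) ≃ₗ[ℤ_[p]] (T × ℤ_[p])) (t : T) (z : ℤ_[p]) :
    α (t, z) = (Amap α t + Bmap α z, dv α * z) := by
  have hx : ((t, z) : T × ℤ_[p]) = (t, 0) + z • ((0 : T), (1 : ℤ_[p])) := by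
    simp [Prod.ext_iff]
  rw [hx, map_add, map_smul, apply_inl, apply_inr, Prod.smul_mk]
  have hb : z • Bmap α 1 = Bmap α z := by
    rw [← map_smul, smul_eq_mul, mul_one]
  have hd : z • dv α = dv α * z := by rw [smul_eq_mul, mul_comm]
  rw [Prod.mk_add_mk, hb, hd, zero_add]

theorem mul_apply (α β : (T × ℤ_[p]) ≃ₗ[ℤ_[p]] (T × ℤ_[p])) (x : T × ℤ_[p]) :
    (α * β) x = α (β x) := rfl

theorem Amap_mul [Finite T] (α β : (T × ℤ_[p]) ≃ₗ[ℤ_[p]] (T × ℤ_[p])) :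
    Amap (α * β) = (Amap α) ∘ₗ (Amap β) := by
  apply LinearMap.ext; intro t
  show ((α * β) (t, 0)).1 = Amap α (Amap β t)
  rw [mul_apply, apply_inl β t]
  rfl

theorem Amap_one : Amap (1 : (T × ℤ_[p]) ≃ₗ[ℤ_[p]] (T × ℤ_[p])) = LinearMap.id := rfl

theorem dv_mul [Finite T] (α β : (T × ℤ_[p]) ≃ₗ[ℤ_[p]] (T × ℤ_[p])) :
    dv (α * β) = dv α * dv β := by
  show ((α * β) (0, 1)).2 = _
  rw [mul_apply, apply_inr β, apply_eq]

theorem dv_one : dv (1 : (T × ℤ_[p]) ≃ₗ[ℤ_[p]] (T × ℤ_[p])) = 1 := rfl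

/-- `dv α` as a unit. -/
def du [Finite T] (α : (T × ℤ_[p]) ≃ₗ[ℤ_[p]] (T × ℤ_[p])) : ℤ_[p]ˣ :=
  ⟨dv α, dv α⁻¹,
    by rw [← dv_mul, mul_inv_cancel, dv_one],
    by rw [← dv_mul, inv_mul_cancel, dv_one]⟩

/-- `Amap α` as a linear equivalence. -/
def Aeq [Finite T] (α : (T × ℤ_[p]) ≃ₗ[ℤ_[p]] (T × ℤ_[p])) : T ≃ₗ[ℤ_[p]] T :=
  LinearEquiv.ofLinear (Amap α) (Amap α⁻¹)
    (by rw [← Amap_mul, mul_inv_cancel, Amap_one])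
    (by rw [← Amap_mul, inv_mul_cancel, Amap_one])

theorem Aeq_apply [Finite T] (α : (T × ℤ_[p]) ≃ₗ[ℤ_[p]] (T × ℤ_[p])) (t : T) :
    Aeq α t = Amap α t := rfl

/-- Assembling an automorphism of `T × ℤ_p` from the three components. -/
def Fmap (a : T ≃ₗ[ℤ_[p]] T) (b : ℤ_[p] →ₗ[ℤ_[p]] T) (u : ℤ_[p]ˣ) :
    (T × ℤ_[p]) ≃ₗ[ℤ_[p]] (T × ℤ_[p]) where
  toFun x := (a x.1 + b x.2, (u : ℤ_[p]) * x.2)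
  map_add' x y := by
    ext
    · simp only [Prod.fst_add, Prod.snd_add, map_add]
      abel
    · simp only [Prod.snd_add, mul_add]
  map_smul' c x := by
    simp only [Prod.smul_fst, Prod.smul_snd, RingHom.id_apply, map_smul, smul_add,
      Prod.smul_mk, smul_eq_mul, Prod.mk.injEq]
    exact ⟨by rw [← smul_eq_mul, map_smul], by ring⟩
  invFun x := (a.symm (x.1 - b ((↑u⁻¹ : ℤ_[p]) * x.2)), (↑u⁻¹ : ℤ_[p]) * x.2)
  left_inv x := by
    have key : (↑u⁻¹ : ℤ_[p]) * ((u : ℤ_[p]) * x.2) = x.2 := by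
      rw [← mul_assoc, Units.inv_mul, one_mul]
    ext
    · simp only [key, add_sub_cancel_right, LinearEquiv.symm_apply_apply]
    · simp only [key]
  right_inv x := by
    have key : (u : ℤ_[p]) * ((↑u⁻¹ : ℤ_[p]) * x.2) = x.2 := by
      rw [← mul_assoc, Units.mul_inv, one_mul]
    ext
    · simp only [LinearEquiv.apply_symm_apply, sub_add_cancel]
    · simp only [key]

theorem Fmap_apply (a : T ≃ₗ[ℤ_[p]] T) (b : ℤ_[p] →ₗ[ℤ_[p]] T) (u : ℤ_[p]ˣ) (x : T × ℤ_[p]) :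
    Fmap a b u x = (a x.1 + b x.2, (u : ℤ_[p]) * x.2) := rfl

theorem Fmap_surj [Finite T] (α : (T × ℤ_[p]) ≃ₗ[ℤ_[p]] (T × ℤ_[p])) :
    Fmap (Aeq α) (Bmap α) (du α) = α := by
  apply LinearEquiv.ext; intro x
  obtain ⟨t, z⟩ := x
  rw [Fmap_apply, apply_eq α t z]
  rfl

theorem Fmap_bijective [Finite T] :
    Function.Bijective (fun x : (T ≃ₗ[ℤ_[p]] T) × (ℤ_[p] →ₗ[ℤ_[p]] T) × ℤ_[p]ˣ =>
      Fmap x.1 x.2.1 x.2.2) := by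
  constructor
  · rintro ⟨a, b, u⟩ ⟨a', b', u'⟩ h
    simp only at h
    have heq : ∀ x : T × ℤ_[p],
        ((a x.1 + b x.2 : T), ((u : ℤ_[p]) * x.2)) =
          ((a' x.1 + b' x.2 : T), ((u' : ℤ_[p]) * x.2)) := fun x => by
      rw [← Fmap_apply, ← Fmap_apply, h]
    have ha : a = a' := by
      apply LinearEquiv.ext; intro t
      have := congrArg Prod.fst (heq (t, 0))
      simpa using this
    have hb : b = b' := by
      apply LinearMap.ext; intro z
      have := congrArg Prod.fst (heq (0, z))
      simpa using this
    have hu : u = u' := by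
      apply Units.ext
      have := congrArg Prod.snd (heq (0, 1))
      simpa using this
    rw [ha, hb, hu]
  · intro α
    exact ⟨⟨Aeq α, Bmap α, du α⟩, Fmap_surj α⟩

/-- The set-theoretic description of the automorphism group. -/
def autEquiv [Finite T] :
    ((T × ℤ_[p]) ≃ₗ[ℤ_[p]] (T × ℤ_[p])) ≃
      ((T ≃ₗ[ℤ_[p]] T) × (ℤ_[p] →ₗ[ℤ_[p]] T) × ℤ_[p]ˣ) :=
  (Equiv.ofBijective _ Fmap_bijective).symm

/-- Homs `ℤ_p → T` are classified by the image of `1`. -/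
def homEquiv : (ℤ_[p] →ₗ[ℤ_[p]] T) ≃ T where
  toFun f := f 1
  invFun t :=
    { toFun := fun z => z • t
      map_add' := fun x y => add_smul x y t
      map_smul' := fun c z => by simp [mul_smul] }
  left_inv f := by
    apply LinearMap.ext; intro z
    show z • f 1 = f z
    rw [← map_smul, smul_eq_mul, mul_one]
  right_inv t := one_smul _ t


theorem exists_L [Finite T] :
    ∃ L : ℕ, 1 ≤ L ∧ ∀ l, L ≤ l → ∀ t : T, ((p : ℤ_[p]) ^ l) • t = 0 := by
  have hp : p.Prime := Fact.out
  have key : ∀ t : T, ((p : ℤ_[p]) ^ ((addOrderOf t).factorization p)) • t = 0 := by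
    intro t
    have hpos : 0 < addOrderOf t := addOrderOf_pos t
    set n := addOrderOf t with hn
    set k := n.factorization p with hk
    set m := ordCompl[p] n with hm
    have hnk : p ^ k * m = n := Nat.ordProj_mul_ordCompl_eq_self n p
    have hcop : Nat.Coprime p m := Nat.coprime_ordCompl hp hpos.ne'
    have hmu : IsUnit (m : ℤ_[p]) := by
      by_contra hmu
      rw [PadicInt.not_isUnit_iff] at hmu
      have hcast : ((m : ℤ) : ℤ_[p]) = (m : ℤ_[p]) := by push_cast; ring
      rw [← hcast, PadicInt.norm_int_lt_one_iff_dvd] at hmu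
      have hpd : p ∣ m := by exact_mod_cast hmu
      exact hp.ne_one (hcop.eq_one_of_dvd hpd)
    have h0 : ((n : ℤ_[p])) • t = 0 := by
      rw [Nat.cast_smul_eq_nsmul]
      exact addOrderOf_nsmul_eq_zero t
    have h1 : ((m : ℤ_[p]) * (p : ℤ_[p]) ^ k) • t = 0 := by
      have he : ((m : ℤ_[p]) * (p : ℤ_[p]) ^ k) = (n : ℤ_[p]) := by
        rw [← hnk]; push_cast; ring
      rw [he]; exact h0
    obtain ⟨u, hu⟩ := hmu
    have he2 : ((↑u⁻¹ : ℤ_[p]) * ((m : ℤ_[p]) * (p : ℤ_[p]) ^ k)) = (p : ℤ_[p]) ^ k := by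
      rw [← hu, ← mul_assoc, Units.inv_mul, one_mul]
    rw [← he2, mul_smul, h1, smul_zero]
  have : ∃ (_ : Fintype T), True := ⟨Fintype.ofFinite T, trivial⟩
  obtain ⟨hF, -⟩ := this
  refine ⟨max (Finset.univ.sup fun t : T => (addOrderOf t).factorization p) 1,
    le_max_right _ _, ?_⟩
  intro l hl t
  have hkl : (addOrderOf t).factorization p ≤ l := by
    refine le_trans ?_ hl
    refine le_trans (Finset.le_sup (f := fun t : T => (addOrderOf t).factorization p)
      (Finset.mem_univ t)) (le_max_left _ _)
  rw [← Nat.sub_add_cancel hkl, pow_add, mul_smul, key t, smul_zero]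

section CosetAnalysis

variable [Finite T] (l : ℕ)

/-- The invariant of an automorphism that classifies its coset mod `U_l`. -/
def gmap (α : (T × ℤ_[p]) ≃ₗ[ℤ_[p]] (T × ℤ_[p])) :
    (T ≃ₗ[ℤ_[p]] T) × (ℤ_[p] →ₗ[ℤ_[p]] T) × (ZMod (p ^ l))ˣ :=
  (Aeq α, Bmap α, Units.map (PadicInt.toZModPow l).toMonoidHom (du α))

theorem sub_cond_iff (hl : ∀ t : T, ((p : ℤ_[p]) ^ l) • t = 0)
    (α β : (T × ℤ_[p]) ≃ₗ[ℤ_[p]] (T × ℤ_[p])) :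
    (∀ x, ∃ y, β x - α x = ((p : ℤ_[p]) ^ l) • y) ↔
      (Amap α = Amap β ∧ Bmap α = Bmap β ∧ ∃ w, dv β - dv α = (p : ℤ_[p]) ^ l * w) := by
  constructor
  · intro hC
    refine ⟨?_, ?_, ?_⟩
    · apply LinearMap.ext; intro t
      obtain ⟨y, hy⟩ := hC (t, 0)
      have h1 := congrArg Prod.fst hy
      simp only [apply_eq, Prod.fst_sub, Prod.smul_fst, map_zero, mul_zero, add_zero,
        hl y.1] at h1
      exact (sub_eq_zero.mp h1).symm
    · apply LinearMap.ext; intro z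
      obtain ⟨y, hy⟩ := hC (0, z)
      have h1 := congrArg Prod.fst hy
      simp only [apply_eq, Prod.fst_sub, Prod.smul_fst, map_zero, zero_add,
        hl y.1] at h1
      exact (sub_eq_zero.mp h1).symm
    · obtain ⟨y, hy⟩ := hC (0, 1)
      refine ⟨y.2, ?_⟩
      have h2 := congrArg Prod.snd hy
      simp only [apply_eq, Prod.snd_sub, Prod.smul_snd, mul_one, smul_eq_mul] at h2
      exact h2
  · rintro ⟨hA, hB, w, hw⟩ ⟨t, z⟩
    refine ⟨(0, w * z), ?_⟩
    rw [apply_eq, apply_eq, ← hA, ← hB]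
    have : ((Amap α t + Bmap α z, dv β * z) - (Amap α t + Bmap α z, dv α * z) : T × ℤ_[p]) =
        (0, (dv β - dv α) * z) := by
      rw [Prod.mk_sub_mk]
      simp [sub_mul]
    rw [this, hw]
    rw [Prod.smul_mk]
    refine Prod.ext (by rw [smul_zero]) ?_
    simp only [smul_eq_mul]
    ring

theorem mem_Ul_iff (hl : ∀ t : T, ((p : ℤ_[p]) ^ l) • t = 0)
    (α β : (T × ℤ_[p]) ≃ₗ[ℤ_[p]] (T × ℤ_[p])) :
    α⁻¹ * β ∈ Ul p (T × ℤ_[p]) l ↔ gmap l α = gmap l β := by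
  have step1 : α⁻¹ * β ∈ Ul p (T × ℤ_[p]) l ↔
      ∀ x, ∃ y, β x - α x = ((p : ℤ_[p]) ^ l) • y := by
    constructor
    · intro h x
      obtain ⟨y, hy⟩ := h x
      refine ⟨α y, ?_⟩
      have h2 : β x - α x = α ((α⁻¹ * β) x - x) := by
        rw [map_sub, mul_apply]
        have : α (α⁻¹ (β x)) = β x := α.apply_symm_apply (β x)
        rw [this]
      rw [h2, hy, map_smul]
    · intro h x
      obtain ⟨y, hy⟩ := h x
      refine ⟨α.symm y, ?_⟩
      have h2 : (α⁻¹ * β) x - x = α.symm (β x - α x) := by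
        rw [map_sub, mul_apply]
        have : α.symm (α x) = x := α.symm_apply_apply x
        rw [this]
        rfl
      rw [h2, hy, map_smul]
  rw [step1, sub_cond_iff l hl α β]
  unfold gmap
  rw [Prod.mk.injEq, Prod.mk.injEq]
  constructor
  · rintro ⟨hA, hB, w, hw⟩
    refine ⟨?_, hB, ?_⟩
    · apply LinearEquiv.ext; intro t
      show Amap α t = Amap β t
      rw [hA]
    · apply Units.ext
      show PadicInt.toZModPow l (dv α) = PadicInt.toZModPow l (dv β)
      have : PadicInt.toZModPow l (dv β - dv α) = 0 := by
        have hker : dv β - dv α ∈ RingHom.ker (PadicInt.toZModPow l (p := p)) := by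
          rw [PadicInt.ker_toZModPow, Ideal.mem_span_singleton]
          exact ⟨w, hw⟩
        exact hker
      rw [map_sub, sub_eq_zero] at this
      exact this.symm
  · rintro ⟨hA, hB, hu⟩
    refine ⟨?_, hB, ?_⟩
    · apply LinearMap.ext; intro t
      have := congrArg (fun e : T ≃ₗ[ℤ_[p]] T => e t) hA
      exact this
    · have hval : PadicInt.toZModPow l (dv α) = PadicInt.toZModPow l (dv β) :=
        congrArg Units.val hu
      have hker : dv β - dv α ∈ RingHom.ker (PadicInt.toZModPow l (p := p)) := by
        rw [RingHom.mem_ker, map_sub, hval, sub_self]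
      rw [PadicInt.ker_toZModPow, Ideal.mem_span_singleton] at hker
      exact hker

theorem lift_unit (hl1 : 1 ≤ l) (u' : (ZMod (p ^ l))ˣ) :
    ∃ u : ℤ_[p]ˣ, PadicInt.toZModPow l (u : ℤ_[p]) = (u' : ZMod (p ^ l)) := by
  have hp : p.Prime := Fact.out
  haveI : NeZero (p ^ l) := ⟨pow_ne_zero _ hp.ne_zero⟩
  have hsurj : Function.Surjective (PadicInt.toZModPow l (p := p)) := by
    intro c
    obtain ⟨n, hn⟩ := ZMod.natCast_zmod_surjective (n := p ^ l) c
    exact ⟨(n : ℤ_[p]), by rw [map_natCast]; exact hn⟩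
  obtain ⟨x, hx⟩ := hsurj (u' : ZMod (p ^ l))
  obtain ⟨y, hy⟩ := hsurj ((u'⁻¹ : (ZMod (p ^ l))ˣ) : ZMod (p ^ l))
  have hker : x * y - 1 ∈ RingHom.ker (PadicInt.toZModPow l (p := p)) := by
    rw [RingHom.mem_ker, map_sub, map_mul, map_one, hx, hy, Units.mul_inv, sub_self]
  rw [PadicInt.ker_toZModPow, Ideal.mem_span_singleton] at hker
  obtain ⟨c, hc⟩ := hker
  have hadd : x * y + (-((p : ℤ_[p]) ^ l * c)) = 1 := by
    have := sub_eq_iff_eq_add.mp hc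
    rw [this]; ring
  have hone : IsUnit (x * y + (-((p : ℤ_[p]) ^ l * c))) := by
    rw [hadd]; exact isUnit_one
  rcases IsLocalRing.isUnit_or_isUnit_of_isUnit_add hone with hxy | hbad
  · have hxu : IsUnit x := isUnit_of_mul_isUnit_left hxy
    refine ⟨hxu.unit, ?_⟩
    rw [IsUnit.unit_spec, hx]
  · exfalso
    have h1 : IsUnit ((p : ℤ_[p]) ^ l * c) := by
      have := hbad.neg
      rwa [neg_neg] at this
    have hdvd : (p : ℤ_[p]) ∣ (p : ℤ_[p]) ^ l * c :=
      Dvd.dvd.mul_right (dvd_pow_self _ (by omega : l ≠ 0)) c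
    have hpu : IsUnit (p : ℤ_[p]) := isUnit_of_dvd_unit hdvd h1
    exact PadicInt.p_nonunit hpu

theorem gmap_surjective (hl1 : 1 ≤ l) :
    Function.Surjective (gmap (p := p) (T := T) l) := by
  rintro ⟨a, b, u'⟩
  obtain ⟨u, hu⟩ := lift_unit l hl1 u'
  refine ⟨Fmap a b u, ?_⟩
  unfold gmap
  have hA : Aeq (Fmap a b u) = a := by
    apply LinearEquiv.ext; intro t
    show Amap (Fmap a b u) t = a t
    show (Fmap a b u (t, 0)).1 = a t
    rw [Fmap_apply]
    simp
  have hB : Bmap (Fmap a b u) = b := by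
    apply LinearMap.ext; intro z
    show (Fmap a b u (0, z)).1 = b z
    rw [Fmap_apply]
    simp
  have hU : Units.map (PadicInt.toZModPow l (p := p)).toMonoidHom (du (Fmap a b u)) = u' := by
    apply Units.ext
    show PadicInt.toZModPow l (dv (Fmap a b u)) = (u' : ZMod (p ^ l))
    have hdv : dv (Fmap a b u) = (u : ℤ_[p]) := by
      show (Fmap a b u ((0 : T), (1 : ℤ_[p]))).2 = (u : ℤ_[p])
      rw [Fmap_apply, mul_one]
    rw [hdv, hu]
  rw [hA, hB, hU]

theorem index_Ul (hl1 : 1 ≤ l) (hl : ∀ t : T, ((p : ℤ_[p]) ^ l) • t = 0) :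
    (Ul p (T × ℤ_[p]) l).index =
      Nat.card T * Nat.card (T ≃ₗ[ℤ_[p]] T) * Nat.card (ZMod (p ^ l))ˣ := by
  rw [Subgroup.index_eq_card]
  have e : (((T × ℤ_[p]) ≃ₗ[ℤ_[p]] (T × ℤ_[p])) ⧸ Ul p (T × ℤ_[p]) l) ≃
      ((T ≃ₗ[ℤ_[p]] T) × (ℤ_[p] →ₗ[ℤ_[p]] T) × (ZMod (p ^ l))ˣ) := by
    refine Equiv.ofBijective
      (Quotient.lift (gmap l) ?_) ⟨?_, ?_⟩
    · intro a b hab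
      exact (mem_Ul_iff l hl a b).mp (QuotientGroup.leftRel_apply.mp hab)
    · intro a b
      induction a using Quotient.ind
      induction b using Quotient.ind
      intro h
      exact Quotient.sound (QuotientGroup.leftRel_apply.mpr ((mem_Ul_iff l hl _ _).mpr h))
    · intro c
      obtain ⟨α, hα⟩ := gmap_surjective l hl1 c
      exact ⟨⟦α⟧, hα⟩
  rw [Nat.card_congr e, Nat.card_prod, Nat.card_prod,
    Nat.card_congr (homEquiv : (ℤ_[p] →ₗ[ℤ_[p]] T) ≃ T)]
  ring

end CosetAnalysis

end Stmt6Aux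

open Stmt6Aux in
theorem stmt6 (p : ℕ) [Fact p.Prime] (H T : Type) [AddCommGroup H] [Module ℤ_[p] H]
    [AddCommGroup T] [Module ℤ_[p] T] [Finite T]
    (hH : Nonempty (H ≃ₗ[ℤ_[p]] (T × ℤ_[p]))) :
    Nonempty ((H ≃ₗ[ℤ_[p]] H) ≃ ((T ≃ₗ[ℤ_[p]] T) × (ℤ_[p] →ₗ[ℤ_[p]] T) × ℤ_[p]ˣ)) ∧
    ∃ L : ℕ, ∀ l ≥ L,
      (Ul p H l).index =
        Nat.card T * Nat.card (T ≃ₗ[ℤ_[p]] T) * Nat.card (ZMod (p ^ l))ˣ := by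
  obtain ⟨e⟩ := hH
  -- transport of the automorphism group along `e`
  let Φ : (H ≃ₗ[ℤ_[p]] H) ≃* ((T × ℤ_[p]) ≃ₗ[ℤ_[p]] (T × ℤ_[p])) :=
    { toFun := fun α => (e.symm.trans α).trans e
      invFun := fun β => (e.trans β).trans e.symm
      left_inv := fun α => by
        apply LinearEquiv.ext; intro x
        simp [LinearEquiv.trans_apply]
      right_inv := fun β => by
        apply LinearEquiv.ext; intro x
        simp [LinearEquiv.trans_apply]
      map_mul' := fun α β => by
        apply LinearEquiv.ext; intro x
        show e ((α * β) (e.symm x)) = e (α (e.symm (e (β (e.symm x)))))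
        rw [e.symm_apply_apply]
        rfl }
  have hΦ : ∀ (α : H ≃ₗ[ℤ_[p]] H) (x : T × ℤ_[p]), Φ α x = e (α (e.symm x)) := fun _ _ => rfl
  constructor
  · exact ⟨Φ.toEquiv.trans autEquiv⟩
  · obtain ⟨L, hL1, hL⟩ := exists_L (p := p) (T := T)
    refine ⟨L, fun l hl => ?_⟩
    have hcomap : Ul p H l = (Ul p (T × ℤ_[p]) l).comap Φ.toMonoidHom := by
      ext α
      simp only [Subgroup.mem_comap]
      constructor
      · intro hα x
        obtain ⟨y, hy⟩ := hα (e.symm x)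
        refine ⟨e y, ?_⟩
        show Φ α x - x = ((p : ℤ_[p]) ^ l) • e y
        have h2 : Φ α x - x = e (α (e.symm x) - e.symm x) := by
          rw [map_sub, hΦ, e.apply_symm_apply]
        rw [h2, hy, map_smul]
      · intro hα x
        obtain ⟨y, hy⟩ := hα (e x)
        have hy' : Φ α (e x) - e x = ((p : ℤ_[p]) ^ l) • y := hy
        refine ⟨e.symm y, ?_⟩
        have h2 : α x - x = e.symm (Φ α (e x) - e x) := by
          rw [map_sub, hΦ, e.symm_apply_apply, e.symm_apply_apply]
        rw [h2, hy', map_smul]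
    rw [hcomap, Subgroup.index_comap_of_surjective _ Φ.surjective]
    exact index_Ul l (le_trans hL1 hl) (hL l hl)
end
end

section
/- For any finite abelian p-group B, the sum over all isomorphism classes of finite abelian p-groups G of |Inj(B, G)|²/|Aut(G)| is finite. -/
noncomputable section

/-- The finite abelian `p`-group `⊕ᵢ ℤ/p^{sᵢ}ℤ` attached to a multiset `s` of positive
integers. Every isomorphism class of finite abelian `p`-groups arises from exactly one `s`,
so sums over `Multiset ℕ+` are sums over isomorphism classes. -/
abbrev Gof (p : ℕ) (s : Multiset ℕ+) : Type :=
  ∀ i : Fin s.toList.length, ZMod (p ^ ((s.toList.get i : ℕ+) : ℕ))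

/-- An additive `p`-group: every element is killed by a power of `p`. -/
def IsAddPGroup (p : ℕ) (F : Type*) [AddMonoid F] : Prop :=
  ∀ x : F, ∃ n : ℕ, p ^ n • x = 0



section
variable {A : Type*} [AddCommGroup A]

def toHom (m : ℕ) (g : A) (hg : m • g = 0) : ZMod m →+ A :=
  ZMod.lift m ⟨(zmultiplesHom A) g, by simpa using hg⟩

lemma toHom_one (m : ℕ) (g : A) (hg : m • g = 0) : toHom m g hg 1 = g := by
  have : ((1 : ℤ) : ZMod m) = 1 := by push_cast; ring
  rw [toHom, ← this, ZMod.lift_coe]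
  simp
end

lemma card_torsion_le {p : ℕ} (hp : 1 < p) (e l : ℕ) (hl : 0 < l) :
    Nat.card {x : ZMod (p ^ l) // (p ^ e : ℕ) • x = 0} ≤ p ^ e := by
  haveI : NeZero (p ^ l) := ⟨pow_ne_zero _ (by omega)⟩
  have hpd : ∀ x : {x : ZMod (p ^ l) // (p ^ e : ℕ) • x = 0}, p ^ (l - e) ∣ (x.1).val := by
    rintro ⟨x, hx⟩
    have h0 : ((p ^ e * x.val : ℕ) : ZMod (p ^ l)) = 0 := by
      rw [Nat.cast_mul, ZMod.natCast_val, ZMod.cast_id, ← nsmul_eq_mul]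
      exact hx
    have hdvd : p ^ l ∣ p ^ e * x.val := (ZMod.natCast_eq_zero_iff _ _).mp h0
    rcases le_or_gt l e with h | h
    · simp [Nat.sub_eq_zero_of_le h]
    · have : p ^ e * p ^ (l - e) ∣ p ^ e * x.val := by
        have h2 : p ^ e * p ^ (l - e) = p ^ l := by rw [← pow_add]; congr 1; omega
        rwa [h2]
      exact (mul_dvd_mul_iff_left (a := p ^ e) (pow_ne_zero _ (by omega))).mp this
  have hlt : ∀ x : {x : ZMod (p ^ l) // (p ^ e : ℕ) • x = 0}, (x.1).val / p ^ (l - e) < p ^ e := by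
    intro x
    rw [Nat.div_lt_iff_lt_mul (pow_pos (by omega) _)]
    calc (x.1).val < p ^ l := ZMod.val_lt _
      _ ≤ p ^ (e + (l - e)) := Nat.pow_le_pow_right (by omega) (by omega)
      _ = p ^ e * p ^ (l - e) := pow_add p e (l - e)
  have key : Function.Injective
      (fun x : {x : ZMod (p ^ l) // (p ^ e : ℕ) • x = 0} => (⟨(x.1).val / p ^ (l - e), hlt x⟩ : Fin (p ^ e))) := by
    intro x y hxy
    simp only [Fin.mk.injEq] at hxy
    have hx := Nat.mul_div_cancel' (hpd x)
    have hy := Nat.mul_div_cancel' (hpd y)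
    have : (x.1).val = (y.1).val := by rw [← hx, ← hy, hxy]
    exact Subtype.ext (ZMod.val_injective _ this)
  calc Nat.card {x : ZMod (p ^ l) // (p ^ e : ℕ) • x = 0}
      ≤ Nat.card (Fin (p ^ e)) := Nat.card_le_card_of_injective _ key
    _ = p ^ e := Nat.card_eq_fintype_card.trans (Fintype.card_fin _)

instance addMonoidHomFinite (M N : Type*) [AddMonoid M] [AddMonoid N] [Finite M] [Finite N] :
    Finite (M →+ N) :=
  Finite.of_injective _ (DFunLike.coe_injective (F := M →+ N))
instance addEquivFinite (M N : Type*) [AddMonoid M] [AddMonoid N] [Finite M] [Finite N] :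
    Finite (M ≃+ N) :=
  Finite.of_injective _ (DFunLike.coe_injective (F := M ≃+ N))

variable (p : ℕ)

abbrev Gl (l : List ℕ+) : Type := ∀ i : Fin l.length, ZMod (p ^ ((l.get i : ℕ+) : ℕ))

lemma card_hom_zmod_ge (hp : 1 < p) (a : ℕ+) (t : List ℕ+) :
    ∏ j : Fin t.length, p ^ min (a : ℕ) ((t.get j : ℕ+) : ℕ) ≤
      Nat.card (ZMod (p ^ (a : ℕ)) →+ Gl p t) := by
  haveI : NeZero p := ⟨by omega⟩
  set n := t.length
  set μ : Fin n → ℕ := fun j => min (a : ℕ) ((t.get j : ℕ+) : ℕ) with hμ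
  set δ : Fin n → ℕ := fun j => ((t.get j : ℕ+) : ℕ) - μ j with hδ
  -- the element of `Gl p t` attached to a parameter `c`
  set gg : (∀ j : Fin n, ZMod (p ^ μ j)) → Gl p t :=
    fun c => fun j => (((c j).val * p ^ δ j : ℕ) : ZMod (p ^ ((t.get j : ℕ+) : ℕ))) with hgg
  have hkill : ∀ c, (p ^ (a : ℕ)) • gg c = 0 := by
    intro c
    funext j
    have : ((p ^ (a : ℕ) * ((c j).val * p ^ δ j) : ℕ) : ZMod (p ^ ((t.get j : ℕ+) : ℕ))) = 0 := by
      rw [ZMod.natCast_eq_zero_iff]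
      have h1 : p ^ ((t.get j : ℕ+) : ℕ) ∣ p ^ ((a : ℕ) + δ j) :=
        pow_dvd_pow p (by simp only [hδ, hμ]; omega)
      have h2 : p ^ ((a : ℕ) + δ j) ∣ p ^ (a : ℕ) * ((c j).val * p ^ δ j) := by
        rw [pow_add]
        exact mul_dvd_mul_left _ (Dvd.dvd.mul_left dvd_rfl _)
      exact h1.trans h2
    calc (p ^ (a : ℕ)) • gg c j = (((p ^ (a : ℕ) * ((c j).val * p ^ δ j) : ℕ)) : ZMod _) := by
          rw [Nat.cast_mul]; rw [nsmul_eq_mul]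
      _ = 0 := this
  have hinj : Function.Injective (fun c => toHom (p ^ (a : ℕ)) (gg c) (hkill c)) := by
    intro c c' h
    have hg : gg c = gg c' := by
      have h1 := congrArg (fun φ : ZMod (p ^ (a : ℕ)) →+ Gl p t => φ 1) h
      simpa only [toHom_one] using h1
    funext j
    have hj := congrFun hg j
    haveI : NeZero (p ^ ((t.get j : ℕ+) : ℕ)) := ⟨pow_ne_zero _ (by omega)⟩
    haveI : NeZero (p ^ μ j) := ⟨pow_ne_zero _ (by omega)⟩
    have hlt : ∀ c0 : ZMod (p ^ μ j), c0.val * p ^ δ j < p ^ ((t.get j : ℕ+) : ℕ) := by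
      intro c0
      have h1 : c0.val < p ^ μ j := ZMod.val_lt _
      have h2 : μ j + δ j = ((t.get j : ℕ+) : ℕ) := by simp only [hδ, hμ]; omega
      calc c0.val * p ^ δ j < p ^ μ j * p ^ δ j :=
            mul_lt_mul_of_pos_right h1 (pow_pos (by omega) _)
        _ = p ^ ((t.get j : ℕ+) : ℕ) := by rw [← pow_add, h2]
    have hj' : (c j).val * p ^ δ j = (c' j).val * p ^ δ j := by
      have e1 := congrArg ZMod.val hj
      rwa [ZMod.val_cast_of_lt (hlt (c j)), ZMod.val_cast_of_lt (hlt (c' j))] at e1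
    have : (c j).val = (c' j).val := Nat.eq_of_mul_eq_mul_right (pow_pos (by omega) _) hj'
    exact ZMod.val_injective _ this
  calc ∏ j : Fin n, p ^ μ j
      = Nat.card (∀ j : Fin n, ZMod (p ^ μ j)) := by
        rw [Nat.card_pi]; congr 1; funext j; rw [Nat.card_zmod]
    _ ≤ Nat.card (ZMod (p ^ (a : ℕ)) →+ Gl p t) := by
        haveI : ∀ j : Fin n, NeZero (p ^ ((t.get j : ℕ+) : ℕ)) :=
          fun j => ⟨pow_ne_zero _ (by omega)⟩
        haveI : NeZero (p ^ (a : ℕ)) := ⟨pow_ne_zero _ (by omega)⟩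
        exact Nat.card_le_card_of_injective _ hinj

lemma card_addaut_zmod_ge (hp : p.Prime) (a : ℕ+) :
    p ^ ((a : ℕ) - 1) ≤ Nat.card (ZMod (p ^ (a : ℕ)) ≃+ ZMod (p ^ (a : ℕ))) := by
  haveI : NeZero (p ^ (a : ℕ)) := ⟨pow_ne_zero _ hp.ne_zero⟩
  have hinj : Function.Injective
      (fun u : (ZMod (p ^ (a : ℕ)))ˣ => DistribMulAction.toAddEquiv (ZMod (p ^ (a : ℕ))) u) := by
    intro u v h
    have h1 := congrArg (fun e : ZMod (p ^ (a : ℕ)) ≃+ ZMod (p ^ (a : ℕ)) => e 1) h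
    apply Units.ext
    simpa [DistribMulAction.toAddEquiv, Units.smul_def] using h1
  calc p ^ ((a : ℕ) - 1) ≤ p ^ ((a : ℕ) - 1) * (p - 1) :=
        Nat.le_mul_of_pos_right _ (by have := hp.two_le; omega)
    _ = Nat.totient (p ^ (a : ℕ)) := (Nat.totient_prime_pow hp a.2).symm
    _ = Nat.card (ZMod (p ^ (a : ℕ)))ˣ := by
        rw [Nat.card_eq_fintype_card, ZMod.card_units_eq_totient]
    _ ≤ Nat.card (ZMod (p ^ (a : ℕ)) ≃+ ZMod (p ^ (a : ℕ))) :=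
        Nat.card_le_card_of_injective _ hinj

section TriangularAut
variable {A H : Type*} [AddCommGroup A] [AddCommGroup H]

def triangAut (α : A ≃+ A) (β : H ≃+ H) (f : A →+ H) : (A × H) ≃+ (A × H) where
  toFun x := (α x.1, f x.1 + β x.2)
  invFun y := (α.symm y.1, β.symm (y.2 - f (α.symm y.1)))
  left_inv x := by simp
  right_inv y := by simp
  map_add' x y := by
    simp only [Prod.fst_add, Prod.snd_add, map_add, Prod.mk_add_mk, Prod.mk.injEq]
    constructor
    · trivial
    · abel

lemma card_aut_prod_ge [Finite A] [Finite H] :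
    Nat.card (A ≃+ A) * Nat.card (H ≃+ H) * Nat.card (A →+ H) ≤
      Nat.card ((A × H) ≃+ (A × H)) := by
  have hinj : Function.Injective
      (fun z : (A ≃+ A) × (H ≃+ H) × (A →+ H) => triangAut z.1 z.2.1 z.2.2) := by
    rintro ⟨α, β, f⟩ ⟨α', β', f'⟩ h
    have happ : ∀ x : A × H, (α x.1, f x.1 + β x.2) = (α' x.1, f' x.1 + β' x.2) :=
      fun x => congrFun (congrArg (fun e : (A × H) ≃+ (A × H) => (e : A × H → A × H)) h) x
    have hα : α = α' := by
      ext x; exact congrArg Prod.fst (happ (x, 0))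
    have hf : f = f' := by
      ext x
      have h2 := congrArg Prod.snd (happ (x, 0))
      simpa using h2
    have hβ : β = β' := by
      ext y
      have h2 := congrArg Prod.snd (happ (0, y))
      simpa using h2
    exact Prod.ext hα (Prod.ext hβ hf)
  calc Nat.card (A ≃+ A) * Nat.card (H ≃+ H) * Nat.card (A →+ H)
      = Nat.card ((A ≃+ A) × (H ≃+ H) × (A →+ H)) := by
        rw [Nat.card_prod, Nat.card_prod, mul_assoc]
    _ ≤ Nat.card ((A × H) ≃+ (A × H)) := Nat.card_le_card_of_injective _ hinj

end TriangularAut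

def piSuccAddEquiv {n : ℕ} (M : Fin (n + 1) → Type*) [∀ i, AddCommGroup (M i)] :
    (∀ i, M i) ≃+ (M 0 × ∀ i : Fin n, M i.succ) where
  toFun f := (f 0, fun i => f i.succ)
  invFun g := Fin.cons g.1 g.2
  left_inv f := Fin.cons_self_tail f
  right_inv g := by simp
  map_add' f g := rfl

lemma card_addaut_congr {M N : Type*} [AddCommGroup M] [AddCommGroup N] (e : M ≃+ N) :
    Nat.card (M ≃+ M) = Nat.card (N ≃+ N) :=
  Nat.card_congr ⟨fun φ => (e.symm.trans φ).trans e, fun ψ => (e.trans ψ).trans e.symm,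
    fun φ => by ext x; simp, fun ψ => by ext x; simp⟩

def Wt : List ℕ+ → ℕ
  | [] => 0
  | a :: t => (((a : ℕ+) : ℕ) - 1) + (t.map (fun k => min ((a : ℕ+) : ℕ) ((k : ℕ+) : ℕ))).sum + Wt t

lemma card_aut_Gl_ge [hp : Fact p.Prime] :
    ∀ l : List ℕ+, p ^ Wt l ≤ Nat.card (Gl p l ≃+ Gl p l)
  | [] => by
    have : Nat.card (Gl p [] ≃+ Gl p []) ≠ 0 := Nat.card_ne_zero.mpr ⟨⟨AddEquiv.refl _⟩, inferInstance⟩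
    simp only [Wt, pow_zero]
    omega
  | a :: t => by
    have hp2 := hp.out.two_le
    have e : Gl p (a :: t) ≃+ (ZMod (p ^ ((a : ℕ+) : ℕ)) × Gl p t) := piSuccAddEquiv _
    rw [card_addaut_congr e]
    have hsum : (t.map (fun k => min ((a : ℕ+) : ℕ) ((k : ℕ+) : ℕ))).sum
        = ∑ j : Fin t.length, min ((a : ℕ+) : ℕ) ((t.get j : ℕ+) : ℕ) := by
      conv_lhs => rw [← List.ofFn_get t]
      rw [List.map_ofFn, List.sum_ofFn]
      rfl
    have hhom : p ^ (t.map (fun k => min ((a : ℕ+) : ℕ) ((k : ℕ+) : ℕ))).sum ≤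
        Nat.card (ZMod (p ^ ((a : ℕ+) : ℕ)) →+ Gl p t) := by
      rw [hsum, ← Finset.prod_pow_eq_pow_sum]
      exact card_hom_zmod_ge p (by omega) a t
    have haut := card_addaut_zmod_ge p hp.out a
    have hrec := card_aut_Gl_ge (hp := hp) t
    calc p ^ Wt (a :: t)
        = p ^ (((a : ℕ+) : ℕ) - 1) * p ^ (t.map (fun k => min ((a : ℕ+) : ℕ) ((k : ℕ+) : ℕ))).sum
            * p ^ Wt t := by rw [Wt, pow_add, pow_add]
      _ ≤ Nat.card (ZMod (p ^ ((a : ℕ+) : ℕ)) ≃+ ZMod (p ^ ((a : ℕ+) : ℕ)))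
            * Nat.card (Gl p t ≃+ Gl p t)
            * Nat.card (ZMod (p ^ ((a : ℕ+) : ℕ)) →+ Gl p t) := by
          have := Nat.mul_le_mul (Nat.mul_le_mul haut hrec) hhom
          calc p ^ (((a : ℕ+) : ℕ) - 1) * p ^ (t.map (fun k => min ((a : ℕ+) : ℕ) ((k : ℕ+) : ℕ))).sum * p ^ Wt t
              = p ^ (((a : ℕ+) : ℕ) - 1) * p ^ Wt t * p ^ (t.map (fun k => min ((a : ℕ+) : ℕ) ((k : ℕ+) : ℕ))).sum := by ring
            _ ≤ _ := this
      _ ≤ Nat.card ((ZMod (p ^ ((a : ℕ+) : ℕ)) × Gl p t) ≃+ (ZMod (p ^ ((a : ℕ+) : ℕ)) × Gl p t)) :=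
          card_aut_prod_ge


def Pl : List ℕ+ → ℕ
  | [] => 0
  | a :: t => (t.map (fun k => min ((a : ℕ+) : ℕ) ((k : ℕ+) : ℕ))).sum + Pl t

def Nsum : List ℕ+ → ℕ
  | [] => 0
  | a :: t => ((a : ℕ+) : ℕ) + Nsum t

lemma min_sum_ge_length (a : ℕ+) (t : List ℕ+) :
    t.length ≤ (t.map (fun k => min ((a : ℕ+) : ℕ) ((k : ℕ+) : ℕ))).sum := by
  induction t with
  | nil => simp
  | cons b t ih =>
    simp only [List.map_cons, List.sum_cons, List.length_cons]
    have h1 : 1 ≤ min ((a : ℕ+) : ℕ) ((b : ℕ+) : ℕ) := le_min a.2 b.2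
    omega

lemma nat_sq_split (n : ℕ) : n * n = n * (n - 1) + n := by
  cases n with
  | zero => rfl
  | succ m => simp [Nat.succ_sub_one]; ring

lemma nat_succ_mul (n : ℕ) : (n + 1) * (n + 1 - 1) = n * (n - 1) + 2 * n := by
  cases n with
  | zero => rfl
  | succ m => simp [Nat.succ_sub_one]; ring

lemma pl_ge (l : List ℕ+) : l.length * (l.length - 1) ≤ 2 * Pl l := by
  induction l with
  | nil => simp
  | cons a t ih =>
    have h1 := min_sum_ge_length a t
    have h2 := nat_succ_mul t.length
    simp only [Pl, List.length_cons]
    omega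

lemma wt_eq (l : List ℕ+) : Wt l + l.length = Nsum l + Pl l := by
  induction l with
  | nil => simp [Wt, Pl, Nsum]
  | cons a t ih =>
    have ha : 0 < ((a : ℕ+) : ℕ) := a.pos
    simp only [Wt, Pl, Nsum, List.length_cons]
    omega

lemma wt_key (b : ℕ) (l : List ℕ+) :
    b * l.length + (Nsum l + l.length) ≤ (b + 3) * (b + 3) + Wt l := by
  have h1 := pl_ge l
  have h2 := wt_eq l
  have h3 : 2 * (b + 3) * l.length ≤ (b + 3) * (b + 3) + l.length * l.length := by
    zify
    nlinarith [sq_nonneg ((b : ℤ) + 3 - (l.length : ℤ))]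
  have h4 : 2 * (b + 3) * l.length = 2 * (b * l.length) + 6 * l.length := by ring
  have h5 := nat_sq_split l.length
  omega

lemma exists_uniform_exponent (p : ℕ) (B : Type*) [AddCommGroup B] [Finite B]
    (hB : ∀ x : B, ∃ n : ℕ, p ^ n • x = 0) :
    ∃ e : ℕ, ∀ x : B, (p ^ e : ℕ) • x = 0 := by
  cases nonempty_fintype B
  choose nf hnf using hB
  refine ⟨Finset.univ.sup nf, fun x => ?_⟩
  have h : nf x ≤ Finset.univ.sup nf := Finset.le_sup (Finset.mem_univ x)
  rw [show Finset.univ.sup nf = nf x + (Finset.univ.sup nf - nf x) by omega, pow_add,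
    mul_nsmul, hnf x, smul_zero]

lemma card_inj_le (p e : ℕ) [hp : Fact p.Prime] (B : Type*) [AddCommGroup B] [Finite B]
    (he : ∀ x : B, (p ^ e : ℕ) • x = 0) (l : List ℕ+) :
    Nat.card {f : B →+ Gl p l // Function.Injective f} ≤ p ^ (e * Nat.card B * l.length) := by
  have hp2 := hp.out.two_le
  set T := ∀ j : Fin l.length, {x : ZMod (p ^ ((l.get j : ℕ+) : ℕ)) // (p ^ e : ℕ) • x = 0}
    with hT
  have step2 : Nat.card (B →+ Gl p l) ≤ Nat.card (B → T) := by
    have hkill : ∀ (φ : B →+ Gl p l) (b : B) (j : Fin l.length),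
        (p ^ e : ℕ) • (φ b j) = 0 := by
      intro φ b j
      have : (p ^ e : ℕ) • (φ b) = 0 := by rw [← map_nsmul, he b, map_zero]
      exact congrFun this j
    have hinj : Function.Injective
        (fun (φ : B →+ Gl p l) => (fun b (j : Fin l.length) => (⟨φ b j, hkill φ b j⟩ : _)) : _ → B → T) := by
      intro φ ψ h
      ext b j
      exact congrArg Subtype.val (congrFun (congrFun h b) j)
    exact Nat.card_le_card_of_injective _ hinj
  have step3 : Nat.card (B → T) ≤ p ^ (e * Nat.card B * l.length) := by
    have hTcard : Nat.card T ≤ p ^ (e * l.length) := by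
      rw [hT, Nat.card_pi]
      calc ∏ j : Fin l.length, Nat.card {x : ZMod (p ^ ((l.get j : ℕ+) : ℕ)) // (p ^ e : ℕ) • x = 0}
          ≤ ∏ _j : Fin l.length, p ^ e :=
            Finset.prod_le_prod (fun _ _ => Nat.zero_le _)
              (fun j _ => card_torsion_le (by omega) e _ (l.get j).2)
        _ = p ^ (e * l.length) := by
            rw [Finset.prod_const, Finset.card_univ, Fintype.card_fin, ← pow_mul]
    calc Nat.card (B → T) = Nat.card T ^ Nat.card B := Nat.card_fun
      _ ≤ (p ^ (e * l.length)) ^ Nat.card B := Nat.pow_le_pow_left hTcard _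
      _ = p ^ (e * Nat.card B * l.length) := by rw [← pow_mul]; ring_nf
  calc Nat.card {f : B →+ Gl p l // Function.Injective f}
      ≤ Nat.card (B →+ Gl p l) := Nat.card_le_card_of_injective Subtype.val Subtype.val_injective
    _ ≤ _ := step2.trans step3

noncomputable def wgeo : ℕ+ → ℝ := fun k => (2⁻¹ : ℝ) ^ ((k : ℕ) + 1)

lemma wgeo_nonneg (k : ℕ+) : 0 ≤ wgeo k := pow_nonneg (by norm_num) _

lemma wprod_nonneg (s : Multiset ℕ+) : 0 ≤ (s.map wgeo).prod :=
  Multiset.prod_nonneg (by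
    intro x hx
    obtain ⟨k, _, rfl⟩ := Multiset.mem_map.mp hx
    exact wgeo_nonneg k)

lemma sum_wgeo_le (T : Finset ℕ+) : ∑ k ∈ T, wgeo k ≤ 2⁻¹ := by
  have hinj : ∀ x ∈ T, ∀ y ∈ T, (fun k : ℕ+ => (k : ℕ) - 1) x = (fun k : ℕ+ => (k : ℕ) - 1) y → x = y := by
    intro x _ y _ h
    have hx : 0 < (x : ℕ) := x.pos
    have hy : 0 < (y : ℕ) := y.pos
    apply PNat.coe_injective
    simp only at h
    omega
  have h1 : ∑ k ∈ T, wgeo k = ∑ i ∈ T.image (fun k : ℕ+ => (k : ℕ) - 1), (2⁻¹ : ℝ) ^ (i + 2) := by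
    rw [Finset.sum_image hinj]
    apply Finset.sum_congr rfl
    intro k _
    have hk : 0 < (k : ℕ) := k.pos
    have : (k : ℕ) + 1 = ((k : ℕ) - 1) + 2 := by omega
    rw [wgeo, this]
  obtain ⟨m, hm⟩ := (T.image (fun k : ℕ+ => (k : ℕ) - 1)).exists_nat_subset_range
  calc ∑ k ∈ T, wgeo k
      = ∑ i ∈ T.image (fun k : ℕ+ => (k : ℕ) - 1), (2⁻¹ : ℝ) ^ (i + 2) := h1
    _ ≤ ∑ i ∈ Finset.range m, (2⁻¹ : ℝ) ^ (i + 2) :=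
        Finset.sum_le_sum_of_subset_of_nonneg hm (fun i _ _ => by positivity)
    _ = 4⁻¹ * ∑ i ∈ Finset.range m, (1 / (2 : ℝ)) ^ i := by
        rw [Finset.mul_sum]
        apply Finset.sum_congr rfl
        intro i _
        rw [pow_add]
        norm_num
        ring
    _ ≤ 4⁻¹ * 2 := by
        have := sum_geometric_two_le m
        nlinarith
    _ = 2⁻¹ := by norm_num

lemma prod_sum_le : ∀ (n : ℕ) (V : Finset (Multiset ℕ+)), (∀ s ∈ V, Multiset.card s = n) →
    ∑ s ∈ V, ((s.map wgeo).prod) ≤ (2⁻¹ : ℝ) ^ n := by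
  intro n
  induction n with
  | zero =>
    intro V hV
    have hsub : V ⊆ {(0 : Multiset ℕ+)} := by
      intro s hs
      rw [Finset.mem_singleton]
      exact Multiset.card_eq_zero.mp (hV s hs)
    calc ∑ s ∈ V, ((s.map wgeo).prod)
        ≤ ∑ s ∈ ({(0 : Multiset ℕ+)} : Finset (Multiset ℕ+)), ((s.map wgeo).prod) :=
          Finset.sum_le_sum_of_subset_of_nonneg hsub (fun s _ _ => wprod_nonneg s)
      _ = 1 := by simp
      _ = (2⁻¹ : ℝ) ^ 0 := by norm_num
  | succ n ih =>
    intro V hV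
    set hd : Multiset ℕ+ → ℕ+ := fun s => s.toList.head! with hhd
    have hmem : ∀ s ∈ V, hd s ∈ s := by
      intro s hs
      have hne : s.toList ≠ [] := by
        rw [Ne, Multiset.toList_eq_nil]
        intro h0
        have := hV s hs
        rw [h0] at this
        simp at this
      exact Multiset.mem_toList.mp (List.head!_mem_self hne)
    have hkey : ∀ s ∈ V, hd s ::ₘ s.erase (hd s) = s := fun s hs => Multiset.cons_erase (hmem s hs)
    have hcard : ∀ s ∈ V, Multiset.card (s.erase (hd s)) = n := by
      intro s hs
      rw [Multiset.card_erase_of_mem (hmem s hs), hV s hs]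
      rfl
    set pairF : Multiset ℕ+ → ℕ+ × Multiset ℕ+ := fun s => (hd s, s.erase (hd s)) with hpairF
    have hinj : ∀ x ∈ V, ∀ y ∈ V, pairF x = pairF y → x = y := by
      intro x hx y hy h
      have h1 : hd x = hd y := congrArg Prod.fst h
      have h2 : x.erase (hd x) = y.erase (hd y) := congrArg Prod.snd h
      rw [← hkey x hx, ← hkey y hy, h2, h1]
    calc ∑ s ∈ V, ((s.map wgeo).prod)
        = ∑ s ∈ V, wgeo (hd s) * (((s.erase (hd s)).map wgeo).prod) := by
          apply Finset.sum_congr rfl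
          intro s hs
          conv_lhs => rw [← hkey s hs]
          rw [Multiset.map_cons, Multiset.prod_cons]
      _ = ∑ x ∈ V.image pairF, wgeo x.1 * ((x.2.map wgeo).prod) := by
          rw [Finset.sum_image hinj]
      _ ≤ ∑ x ∈ (V.image hd) ×ˢ (V.image (fun s => s.erase (hd s))), wgeo x.1 * ((x.2.map wgeo).prod) := by
          apply Finset.sum_le_sum_of_subset_of_nonneg
          · intro x hx
            obtain ⟨s, hs, rfl⟩ := Finset.mem_image.mp hx
            exact Finset.mem_product.mpr ⟨Finset.mem_image_of_mem _ hs, Finset.mem_image_of_mem _ hs⟩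
          · intro x _ _
            exact mul_nonneg (wgeo_nonneg _) (wprod_nonneg _)
      _ = (∑ k ∈ V.image hd, wgeo k) * (∑ t ∈ V.image (fun s => s.erase (hd s)), ((t.map wgeo).prod)) := by
          rw [Finset.sum_mul_sum, Finset.sum_product]
      _ ≤ 2⁻¹ * (2⁻¹ : ℝ) ^ n := by
          apply mul_le_mul (sum_wgeo_le _)
          · apply ih
            intro t ht
            obtain ⟨s, hs, rfl⟩ := Finset.mem_image.mp ht
            exact hcard s hs
          · exact Finset.sum_nonneg (fun t _ => wprod_nonneg t)
          · norm_num
      _ = (2⁻¹ : ℝ) ^ (n + 1) := by ring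

lemma summable_wprod : Summable (fun s : Multiset ℕ+ => (s.map wgeo).prod) := by
  apply summable_of_sum_le (c := 2) (fun s => wprod_nonneg s)
  intro U
  have hmaps : ∀ s ∈ U, Multiset.card s ∈ Finset.range (U.sup Multiset.card + 1) := by
    intro s hs
    rw [Finset.mem_range]
    exact Nat.lt_succ_of_le (Finset.le_sup hs)
  calc ∑ s ∈ U, (s.map wgeo).prod
      = ∑ n ∈ Finset.range (U.sup Multiset.card + 1),
          ∑ s ∈ U.filter (fun s => Multiset.card s = n), (s.map wgeo).prod :=
        (Finset.sum_fiberwise_of_maps_to hmaps _).symm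
    _ ≤ ∑ n ∈ Finset.range (U.sup Multiset.card + 1), (2⁻¹ : ℝ) ^ n := by
        apply Finset.sum_le_sum
        intro n _
        exact prod_sum_le n _ (fun s hs => (Finset.mem_filter.mp hs).2)
    _ ≤ 2 := by
        have h := sum_geometric_two_le (U.sup Multiset.card + 1)
        have : ∀ i : ℕ, (2⁻¹ : ℝ) ^ i = (1 / (2:ℝ)) ^ i := by intro i; norm_num
        calc ∑ n ∈ Finset.range (U.sup Multiset.card + 1), (2⁻¹ : ℝ) ^ n
            = ∑ n ∈ Finset.range (U.sup Multiset.card + 1), (1 / (2:ℝ)) ^ n := by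
              apply Finset.sum_congr rfl; intro n _; rw [this n]
          _ ≤ 2 := h

lemma wprod_eq (l : List ℕ+) : ((l.map wgeo).prod) = (2⁻¹ : ℝ) ^ (Nsum l + l.length) := by
  induction l with
  | nil => simp [Nsum]
  | cons a t ih =>
    simp only [List.map_cons, List.prod_cons, ih, Nsum, List.length_cons, wgeo]
    rw [← pow_add]
    congr 1
    omega

theorem stmt10' (p : ℕ) [hp : Fact p.Prime] (B : Type) [AddCommGroup B] [Finite B]
    (hB : ∀ x : B, ∃ n : ℕ, p ^ n • x = 0) :
    Summable (fun s : Multiset ℕ+ =>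
      ((Nat.card {f : B →+ Gl p s.toList // Function.Injective f} : ℝ) ^ 2) /
        (Nat.card (Gl p s.toList ≃+ Gl p s.toList) : ℝ)) := by
  have hp2 := hp.out.two_le
  obtain ⟨e, he⟩ := exists_uniform_exponent p B hB
  set b : ℕ := 2 * (e * Nat.card B) with hb
  set A : ℕ := (b + 3) * (b + 3) with hA
  apply Summable.of_nonneg_of_le (f := fun s : Multiset ℕ+ => (p : ℝ) ^ A * ((s.map wgeo).prod))
  · intro s
    positivity
  · intro s
    set l := s.toList with hl
    have h1 : Nat.card {f : B →+ Gl p l // Function.Injective f} ≤ p ^ (e * Nat.card B * l.length) :=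
      card_inj_le p e B he l
    have h2 : p ^ Wt l ≤ Nat.card (Gl p l ≃+ Gl p l) := card_aut_Gl_ge p l
    have hkey : b * l.length + (Nsum l + l.length) ≤ A + Wt l := wt_key b l
    have hc1 : ((Nat.card {f : B →+ Gl p l // Function.Injective f} : ℝ)) ^ 2 ≤ (p : ℝ) ^ (b * l.length) := by
      have : ((Nat.card {f : B →+ Gl p l // Function.Injective f} : ℝ)) ≤ (p : ℝ) ^ (e * Nat.card B * l.length) := by
        exact_mod_cast Nat.cast_le.mpr h1
      calc ((Nat.card {f : B →+ Gl p l // Function.Injective f} : ℝ)) ^ 2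
          ≤ ((p : ℝ) ^ (e * Nat.card B * l.length)) ^ 2 :=
            pow_le_pow_left₀ (Nat.cast_nonneg _) this 2
        _ = (p : ℝ) ^ (b * l.length) := by
            rw [← pow_mul]
            congr 1
            rw [hb]
            ring
    have hc2 : (p : ℝ) ^ Wt l ≤ (Nat.card (Gl p l ≃+ Gl p l) : ℝ) := by
      exact_mod_cast Nat.cast_le.mpr h2
    have hppos : (0 : ℝ) < (p : ℝ) := by positivity
    have hpow : ∀ m : ℕ, (0 : ℝ) < (p : ℝ) ^ m := fun m => pow_pos hppos m
    calc ((Nat.card {f : B →+ Gl p l // Function.Injective f} : ℝ)) ^ 2 /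
          (Nat.card (Gl p l ≃+ Gl p l) : ℝ)
        ≤ (p : ℝ) ^ (b * l.length) / (p : ℝ) ^ Wt l :=
          div_le_div₀ (by positivity) hc1 (hpow _) hc2
      _ ≤ (p : ℝ) ^ A / (p : ℝ) ^ (Nsum l + l.length) := by
          rw [div_le_div_iff₀ (hpow _) (hpow _), ← pow_add, ← pow_add]
          exact pow_le_pow_right₀ (by exact_mod_cast Nat.one_le_cast.mpr (by omega)) hkey
      _ ≤ (p : ℝ) ^ A * ((s.map wgeo).prod) := by
          have hprod : (s.map wgeo).prod = ((l.map wgeo).prod) := by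
            rw [hl]
            conv_lhs => rw [← Multiset.coe_toList s]
            rw [Multiset.map_coe, Multiset.prod_coe]
          rw [hprod, wprod_eq l, div_eq_mul_inv, ← inv_pow]
          apply mul_le_mul_of_nonneg_left _ (by positivity)
          apply pow_le_pow_left₀ (by positivity)
          rw [inv_le_inv₀ (by positivity) (by norm_num)]
          exact_mod_cast Nat.ofNat_le_cast.mpr hp2
  · exact (summable_wprod.mul_left _)


/-- for a finite abelian `p`-group `B`, the sum over isomorphism classes of
finite abelian `p`-groups `G` of `|Inj(B,G)|²/|Aut(G)|` is finite. -/
theorem stmt10 (p : ℕ) [Fact p.Prime] (B : Type) [AddCommGroup B] [Finite B]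
    (hB : IsAddPGroup p B) :
    Summable (fun s : Multiset ℕ+ =>
      ((Nat.card {f : B →+ Gof p s // Function.Injective f} : ℝ) ^ 2) /
        (Nat.card (Gof p s ≃+ Gof p s) : ℝ)) := by
  exact stmt10' p B hB
end
end

section
/- For finite abelian p-groups F₁, F₂, the number of subgroups K ≤ F₁ × F₂ that project surjectively onto both factors equals Σ_{G'} |Sur(F₁, G')|·|Sur(F₂, G')| / |Aut(G')|, summed over isomorphism classes of finite abelian p-groups G' (a finite sum). -/
noncomputable section

namespace Stmt13Aux

/-- Additive version of `Fin.consEquiv`-style splitting. -/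
def piFinSuccAE {n : ℕ} (M : Fin (n + 1) → Type*) [∀ i, AddMonoid (M i)] :
    (∀ i, M i) ≃+ M 0 × ∀ i : Fin n, M i.succ where
  toFun f := (f 0, fun i => f i.succ)
  invFun x := Fin.cases x.1 x.2
  left_inv f := by
    funext i
    induction i using Fin.cases <;> simp
  right_inv x := by simp
  map_add' f g := rfl

def piCongrLeftAE {α β : Type*} (M : β → Type*) [∀ b, AddMonoid (M b)] (e : α ≃ β) :
    (∀ b, M b) ≃+ ∀ a, M (e a) :=
  { Equiv.piCongrLeft' M e.symm with map_add' := fun _ _ => rfl }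

variable (p : ℕ)

abbrev piL (l : List ℕ+) : Type := ∀ i : Fin l.length, ZMod (p ^ ((l.get i : ℕ+) : ℕ))

def piLCons (a : ℕ+) (l : List ℕ+) : piL p (a :: l) ≃+ ZMod (p ^ (a : ℕ)) × piL p l :=
  piFinSuccAE (fun i : Fin (l.length + 1) => ZMod (p ^ (((a :: l).get i : ℕ+) : ℕ)))

theorem piL_perm : ∀ {l₁ l₂ : List ℕ+}, l₁.Perm l₂ → Nonempty (piL p l₁ ≃+ piL p l₂) := by
  intro l₁ l₂ h
  induction h with
  | nil => exact ⟨AddEquiv.refl _⟩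
  | cons a h ih =>
      exact ⟨(piLCons p a _).trans (((AddEquiv.refl _).prodCongr ih.some).trans
        (piLCons p a _).symm)⟩
  | swap a b l =>
      exact ⟨(piLCons p b _).trans <|
        (((AddEquiv.refl _).prodCongr (piLCons p a _)).trans <|
        AddEquiv.prodAssoc.symm.trans <|
        ((AddEquiv.prodComm.prodCongr (AddEquiv.refl _)).trans <|
        AddEquiv.prodAssoc.trans <|
        ((AddEquiv.refl _).prodCongr (piLCons p b _).symm).trans (piLCons p a _).symm))⟩
  | trans _ _ ih₁ ih₂ => exact ⟨ih₁.some.trans ih₂.some⟩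

theorem piL_map {ι : Type*} (v : ι → ℕ+) :
    ∀ l : List ι, Nonempty ((∀ j : Fin l.length, ZMod (p ^ ((v (l.get j) : ℕ+) : ℕ)))
      ≃+ piL p (l.map v)) := by
  intro l
  induction l with
  | nil =>
      haveI : Unique (∀ j : Fin ([] : List ι).length, ZMod (p ^ ((v (([] : List ι).get j) : ℕ+) : ℕ))) :=
        ⟨⟨fun j => j.elim0⟩, fun f => funext fun j => j.elim0⟩
      haveI : Unique (piL p (([] : List ι).map v)) :=
        ⟨⟨fun j => j.elim0⟩, fun f => funext fun j => j.elim0⟩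
      exact ⟨AddEquiv.ofUnique⟩
  | cons a l ih =>
      exact ⟨(piFinSuccAE (fun j : Fin (l.length + 1) =>
          ZMod (p ^ ((v ((a :: l).get j) : ℕ+) : ℕ)))).trans <|
        (((AddEquiv.refl _).prodCongr ih.some).trans (piLCons p (v a) (l.map v)).symm)⟩

theorem pi_equiv_gof {ι : Type} [Fintype ι] [DecidableEq ι] (v : ι → ℕ+) :
    Nonempty ((∀ i : ι, ZMod (p ^ ((v i : ℕ+) : ℕ))) ≃+ Gof p (Finset.univ.val.map v)) := by
  classical
  set l : List ι := Finset.univ.toList with hl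
  have hnd : l.Nodup := Finset.nodup_toList _
  have hmem : ∀ x : ι, x ∈ l := fun x => Finset.mem_toList.2 (Finset.mem_univ x)
  have e : Fin l.length ≃ ι := hnd.getEquivOfForallMemList l hmem
  refine ⟨((piCongrLeftAE (fun i : ι => ZMod (p ^ ((v i : ℕ+) : ℕ)))
    (hnd.getEquivOfForallMemList l hmem)).trans ((piL_map p v l).some)).trans ?_⟩
  have hperm : (l.map v).Perm (Finset.univ.val.map v).toList := by
    rw [← Multiset.coe_eq_coe, Multiset.coe_toList, ← Multiset.map_coe, hl,
      Finset.coe_toList]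
  exact (piL_perm p hperm).some
end Stmt13Aux

namespace Stmt13Aux2
theorem isAddPGroup_of_equiv {p : ℕ} {F G : Type*} [AddCommGroup F] [AddCommGroup G]
    (e : F ≃+ G) (h : IsAddPGroup p F) : IsAddPGroup p G := fun x => by
  obtain ⟨n, hn⟩ := h (e.symm x)
  refine ⟨n, ?_⟩
  have := congrArg e hn
  simpa [map_nsmul] using this

def piSubtypeAE {ι : Type*} (P : ι → Prop) [DecidablePred P] (M : ι → Type*)
    [∀ i, AddMonoid (M i)] (h : ∀ i, ¬P i → Subsingleton (M i)) :
    (∀ i, M i) ≃+ ∀ i : {i // P i}, M i.1 where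
  toFun f i := f i
  invFun g i := if hh : P i then g ⟨i, hh⟩ else 0
  left_inv f := funext fun i => by
    by_cases hh : P i
    · simp [hh]
    · haveI := h i hh; exact Subsingleton.elim _ _
  right_inv g := funext fun i => by simp [i.2]
  map_add' f g := rfl

theorem exists_gof (p : ℕ) [Fact p.Prime] (F : Type) [AddCommGroup F] [Finite F]
    (hF : IsAddPGroup p F) : ∃ s : Multiset ℕ+, Nonempty (F ≃+ Gof p s) := by
  classical
  obtain ⟨ι, hι, q, hq, n, ⟨f⟩⟩ := AddCommGroup.equiv_directSum_zmod_of_finite F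
  have f2 : F ≃+ ∀ i : ι, ZMod (q i ^ n i) := f.trans (DirectSum.addEquivProd _)
  have hsub : ∀ i : ι, ¬(n i ≠ 0) → Subsingleton (ZMod (q i ^ n i)) := by
    intro i hi
    rw [not_not] at hi
    rw [hi, pow_zero]
    infer_instance
  have f3 : F ≃+ ∀ i : {i : ι // n i ≠ 0}, ZMod (q i.1 ^ n i.1) :=
    f2.trans (piSubtypeAE _ _ hsub)
  -- every surviving prime equals p
  have hqp : ∀ i : {i : ι // n i ≠ 0}, q i.1 = p := by
    intro i
    have hpg : IsAddPGroup p (∀ j : {i : ι // n i ≠ 0}, ZMod (q j.1 ^ n j.1)) :=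
      isAddPGroup_of_equiv f3 hF
    obtain ⟨m, hm⟩ := hpg (Pi.single i 1)
    have h1 : (p ^ m) • (1 : ZMod (q i.1 ^ n i.1)) = 0 := by
      have := congrFun hm i
      simpa [Pi.single_eq_same] using this
    have h2 : ((p ^ m : ℕ) : ZMod (q i.1 ^ n i.1)) = 0 := by
      simpa [nsmul_eq_mul] using h1
    have h3 : q i.1 ^ n i.1 ∣ p ^ m := by
      haveI : NeZero (q i.1 ^ n i.1) := ⟨pow_ne_zero _ (hq i.1).pos.ne'⟩
      exact (ZMod.natCast_eq_zero_iff _ _).mp h2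
    have h4 : q i.1 ∣ p ^ m := dvd_trans (dvd_pow_self _ i.2) h3
    have h5 : q i.1 ∣ p := (hq i.1).dvd_of_dvd_pow h4
    exact ((Nat.prime_dvd_prime_iff_eq (hq i.1) (Fact.out)).mp h5)
  set v : {i : ι // n i ≠ 0} → ℕ+ := fun i => ⟨n i.1, Nat.pos_of_ne_zero i.2⟩ with hv
  have f4 : F ≃+ ∀ i : {i : ι // n i ≠ 0}, ZMod (p ^ ((v i : ℕ+) : ℕ)) :=
    f3.trans (AddEquiv.piCongrRight fun i =>
      (ZMod.ringEquivCongr (by rw [hqp i]; rfl)).toAddEquiv)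
  refine ⟨Finset.univ.val.map v, ⟨f4.trans (Stmt13Aux.pi_equiv_gof p v).some⟩⟩
end Stmt13Aux2

namespace Stmt13Aux3
open Stmt13Aux

theorem card_torsion_zmod (p : ℕ) (hp : p.Prime) (a k : ℕ) :
    Nat.card {x : ZMod (p ^ a) // (p ^ k : ℕ) • x = 0} = p ^ min a k := by
  haveI : NeZero (p ^ a) := ⟨pow_ne_zero _ hp.pos.ne'⟩
  set c : ZMod (p ^ a) := ((p ^ k : ℕ) : ZMod (p ^ a)) with hc
  set φ : ZMod (p ^ a) →+ ZMod (p ^ a) := (p ^ k : ℕ) • AddMonoidHom.id (ZMod (p ^ a)) with hφ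
  have hφapp : ∀ x, φ x = (p ^ k : ℕ) • x := fun x => rfl
  have hker : Nat.card {x : ZMod (p ^ a) // (p ^ k : ℕ) • x = 0} = Nat.card φ.ker :=
    Nat.card_congr (Equiv.subtypeEquivRight fun x => by simp [AddMonoidHom.mem_ker, hφapp])
  have hrange : φ.range = AddSubgroup.zmultiples c := by
    apply le_antisymm
    · rintro _ ⟨x, rfl⟩
      refine ⟨(x.val : ℤ), ?_⟩
      show (x.val : ℤ) • c = φ x
      rw [natCast_zsmul, hφapp, hc, nsmul_eq_mul, nsmul_eq_mul, Nat.cast_pow, mul_comm,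
        ZMod.natCast_val, ZMod.cast_id]
    · rintro _ ⟨m, rfl⟩
      refine ⟨m • 1, ?_⟩
      show φ (m • 1) = m • c
      rw [map_zsmul, hφapp, hc, nsmul_eq_mul, mul_one]
  have horder : addOrderOf c = p ^ a / p ^ min a k := by
    rw [hc, ZMod.addOrderOf_coe _ (NeZero.ne _)]
    congr 1
    rcases le_total a k with h | h
    · rw [Nat.gcd_eq_left (pow_dvd_pow p h), min_eq_left h]
    · rw [Nat.gcd_eq_right (pow_dvd_pow p h), min_eq_right h]
  have hdiv : p ^ a / p ^ min a k = p ^ (a - min a k) := Nat.pow_div (min_le_left a k) hp.pos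
  have hcardq : Nat.card (ZMod (p ^ a) ⧸ φ.ker) = p ^ (a - min a k) := by
    rw [Nat.card_congr (QuotientAddGroup.quotientKerEquivRange φ).toEquiv, hrange,
      Nat.card_zmultiples, horder, hdiv]
  have htot := AddSubgroup.card_eq_card_quotient_mul_card_addSubgroup φ.ker
  rw [Nat.card_zmod, hcardq] at htot
  rw [hker]
  have hpa : p ^ a = p ^ (a - min a k) * p ^ min a k := by
    rw [← pow_add, Nat.sub_add_cancel (min_le_left a k)]
  have := htot.symm.trans hpa
  exact (Nat.eq_of_mul_eq_mul_left (pow_pos hp.pos _) this.symm).symm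
end Stmt13Aux3

namespace Stmt13Aux4
open Stmt13Aux Stmt13Aux3

theorem sum_fin_get_map {α : Type*} (f : α → ℕ) :
    ∀ l : List α, ∑ i : Fin l.length, f (l.get i) = (l.map f).sum
  | [] => by simp
  | a :: l => by
      show ∑ i : Fin (l.length + 1), f ((a :: l).get i) = _
      rw [Fin.sum_univ_succ]
      simp [sum_fin_get_map f l]

theorem card_torsion_gof (p : ℕ) (hp : p.Prime) (s : Multiset ℕ+) (k : ℕ) :
    Nat.card {x : Gof p s // (p ^ k : ℕ) • x = 0} =
      p ^ ((s.map fun a : ℕ+ => min (a : ℕ) k).sum) := by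
  have e1 : {x : Gof p s // (p ^ k : ℕ) • x = 0} ≃
      ∀ i : Fin s.toList.length,
        {y : ZMod (p ^ ((s.toList.get i : ℕ+) : ℕ)) // (p ^ k : ℕ) • y = 0} :=
    (Equiv.subtypeEquivRight fun x => by
      constructor
      · intro h i; exact congrFun h i
      · intro h; funext i; exact h i).trans (Equiv.subtypePiEquivPi)
  rw [Nat.card_congr e1, Nat.card_pi]
  rw [Finset.prod_congr rfl (fun i _ => card_torsion_zmod p hp _ k),
    Finset.prod_pow_eq_pow_sum]
  congr 1
  conv_rhs => rw [← Multiset.coe_toList s]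
  rw [Multiset.map_coe, Multiset.sum_coe]
  exact sum_fin_get_map (fun a : ℕ+ => min (a : ℕ) k) s.toList

theorem minsum_step (k : ℕ) (s : Multiset ℕ+) :
    (s.map fun a : ℕ+ => min (a : ℕ) (k + 1)).sum =
      (s.map fun a : ℕ+ => min (a : ℕ) k).sum + (s.filter fun a : ℕ+ => k < (a : ℕ)).card := by
  induction s using Multiset.induction with
  | empty => simp
  | cons a s ih =>
      rw [Multiset.map_cons, Multiset.sum_cons, Multiset.map_cons, Multiset.sum_cons,
        Multiset.filter_cons, Multiset.card_add, ih]
      by_cases h : k < (a : ℕ) <;> simp [h] <;> omega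

theorem filter_card_step (k : ℕ) (s : Multiset ℕ+) :
    (s.filter fun a : ℕ+ => k < (a : ℕ)).card =
      (s.filter fun a : ℕ+ => k + 1 < (a : ℕ)).card + s.count (⟨k + 1, Nat.succ_pos k⟩ : ℕ+) := by
  induction s using Multiset.induction with
  | empty => simp; rfl
  | cons a s ih =>
      rw [Multiset.filter_cons, Multiset.filter_cons, Multiset.card_add, Multiset.card_add,
        ih]
      erw [Multiset.count_cons]
      have key : ((⟨k + 1, Nat.succ_pos k⟩ : ℕ+) = a) ↔ (a : ℕ) = k + 1 :=
        ⟨fun h => by rw [← h]; rfl, fun h => (PNat.coe_injective (show ((a:ℕ+):ℕ) = ((⟨k+1, Nat.succ_pos k⟩:ℕ+):ℕ) from h)).symm⟩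
      by_cases h3 : (a : ℕ) = k + 1
      · have h1 : ¬(k + 1 < (a : ℕ)) := by omega
        have h2 : k < (a : ℕ) := by omega
        simp [h1, h2, key, h3]
        omega
      · by_cases h2 : k < (a : ℕ)
        · have h1 : k + 1 < (a : ℕ) := by omega
          simp [h1, h2, key, h3]
          omega
        · have h1 : ¬(k + 1 < (a : ℕ)) := by omega
          simp [h1, h2, key, h3]

theorem multiset_eq_of_minsum {s t : Multiset ℕ+}
    (h : ∀ k, (s.map fun a : ℕ+ => min (a : ℕ) k).sum = (t.map fun a : ℕ+ => min (a : ℕ) k).sum) :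
    s = t := by
  have hf : ∀ k, (s.filter fun a : ℕ+ => k < (a : ℕ)).card = (t.filter fun a : ℕ+ => k < (a : ℕ)).card := by
    intro k
    have h2 := h (k + 1)
    rw [minsum_step, minsum_step, h k] at h2
    exact Nat.add_left_cancel h2
  ext a
  obtain ⟨m, hm⟩ := a
  obtain ⟨k, rfl⟩ := Nat.exists_eq_succ_of_ne_zero hm.ne'
  have h1 := filter_card_step k s
  have h2 := filter_card_step k t
  rw [hf k, hf (k + 1)] at h1
  have h3 := h1.symm.trans h2
  exact Nat.add_left_cancel h3

theorem gof_injective (p : ℕ) [Fact p.Prime] {s t : Multiset ℕ+} (e : Gof p s ≃+ Gof p t) :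
    s = t := by
  apply multiset_eq_of_minsum
  intro k
  apply Nat.pow_right_injective (Fact.out : p.Prime).two_le
  beta_reduce
  rw [← card_torsion_gof p Fact.out s k, ← card_torsion_gof p Fact.out t k]
  refine Nat.card_congr (Equiv.subtypeEquiv e.toEquiv fun x => ?_)
  show _ ↔ (p ^ k : ℕ) • (e x) = 0
  rw [(map_nsmul e _ x).symm]
  exact ⟨fun h => by rw [h, map_zero], fun h => e.injective (by rw [h, map_zero])⟩
end Stmt13Aux4

namespace Stmt13Aux5
open Stmt13Aux Function

variable {F₁ F₂ G : Type} [AddCommGroup F₁] [AddCommGroup F₂] [AddCommGroup G]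

def psi (φ₁ : F₁ →+ G) (φ₂ : F₂ →+ G) : F₁ × F₂ →+ G :=
  φ₁.comp (AddMonoidHom.fst F₁ F₂) - φ₂.comp (AddMonoidHom.snd F₁ F₂)

theorem psi_apply (φ₁ : F₁ →+ G) (φ₂ : F₂ →+ G) (x : F₁ × F₂) :
    psi φ₁ φ₂ x = φ₁ x.1 - φ₂ x.2 := rfl

theorem psi_surj (φ₁ : F₁ →+ G) (φ₂ : F₂ →+ G) (h : Surjective φ₁) :
    Surjective (psi φ₁ φ₂) := by
  intro g
  obtain ⟨a, ha⟩ := h g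
  exact ⟨(a, 0), by simp [psi_apply, ha]⟩

theorem psi_map_fst (φ₁ : F₁ →+ G) (φ₂ : F₂ →+ G) (h₂ : Surjective φ₂) :
    (psi φ₁ φ₂).ker.map (AddMonoidHom.fst F₁ F₂) = ⊤ := by
  rw [AddSubgroup.eq_top_iff']
  intro a
  obtain ⟨b, hb⟩ := h₂ (φ₁ a)
  exact ⟨(a, b), by simp [AddMonoidHom.mem_ker, psi_apply, hb], rfl⟩

theorem psi_map_snd (φ₁ : F₁ →+ G) (φ₂ : F₂ →+ G) (h₁ : Surjective φ₁) :
    (psi φ₁ φ₂).ker.map (AddMonoidHom.snd F₁ F₂) = ⊤ := by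
  rw [AddSubgroup.eq_top_iff']
  intro b
  obtain ⟨a, ha⟩ := h₁ (φ₂ b)
  exact ⟨(a, b), by simp [AddMonoidHom.mem_ker, psi_apply, ha], rfl⟩

theorem psi_comp (σ : G ≃+ G) (φ₁ : F₁ →+ G) (φ₂ : F₂ →+ G) :
    psi (σ.toAddMonoidHom.comp φ₁) (σ.toAddMonoidHom.comp φ₂) =
      σ.toAddMonoidHom.comp (psi φ₁ φ₂) := by
  ext x <;> simp [psi_apply]

theorem ker_comp_equiv (σ : G ≃+ G) (f : F₁ × F₂ →+ G) :
    (σ.toAddMonoidHom.comp f).ker = f.ker := by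
  ext x
  simp [AddMonoidHom.mem_ker, AddEquiv.map_eq_zero_iff]

theorem exists_sigma (φ₁ : F₁ →+ G) (φ₂ : F₂ →+ G) (φ₁' : F₁ →+ G) (φ₂' : F₂ →+ G)
    (h₁ : Surjective φ₁) (h₁' : Surjective φ₁')
    (hk : (psi φ₁ φ₂).ker = (psi φ₁' φ₂').ker) :
    ∃ σ : G ≃+ G, ∀ x, σ (psi φ₁ φ₂ x) = psi φ₁' φ₂' x := by
  have hs : Surjective (psi φ₁ φ₂) := psi_surj _ _ h₁
  have hs' : Surjective (psi φ₁' φ₂') := psi_surj _ _ h₁'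
  set e := QuotientAddGroup.quotientKerEquivOfSurjective _ hs
  set e' := QuotientAddGroup.quotientKerEquivOfSurjective _ hs'
  set q := QuotientAddGroup.quotientAddEquivOfEq hk
  refine ⟨e.symm.trans (q.trans e'), fun x => ?_⟩
  have h1 : e.symm (psi φ₁ φ₂ x) = QuotientAddGroup.mk x := by
    apply e.injective
    simp only [AddEquiv.apply_symm_apply]
    rfl
  simp only [AddEquiv.trans_apply, h1]
  rfl

/-- The subgroup attached to a pair of surjections, with surjective projections. -/
theorem ker_psi_of_quotient (K : AddSubgroup (F₁ × F₂)) (e : (F₁ × F₂) ⧸ K ≃+ G)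
    (hfst : K.map (AddMonoidHom.fst F₁ F₂) = ⊤) (hsnd : K.map (AddMonoidHom.snd F₁ F₂) = ⊤) :
    ∃ (φ₁ : F₁ →+ G) (φ₂ : F₂ →+ G), Surjective φ₁ ∧ Surjective φ₂ ∧ (psi φ₁ φ₂).ker = K := by
  classical
  set mk : F₁ × F₂ →+ (F₁ × F₂) ⧸ K := QuotientAddGroup.mk' K
  set φ₁ : F₁ →+ G := (e.toAddMonoidHom.comp mk).comp (AddMonoidHom.inl F₁ F₂)
  set φ₂ : F₂ →+ G := -((e.toAddMonoidHom.comp mk).comp (AddMonoidHom.inr F₁ F₂))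
  have hψ : ∀ x : F₁ × F₂, psi φ₁ φ₂ x = e (mk x) := by
    intro x
    rw [psi_apply]
    show e (mk (x.1, 0)) - (-(e (mk (0, x.2)))) = e (mk x)
    rw [sub_neg_eq_add, ← map_add, ← map_add]
    congr 1
    exact congrArg mk (by simp [Prod.ext_iff])
  have hker : (psi φ₁ φ₂).ker = K := by
    ext x
    rw [AddMonoidHom.mem_ker, hψ, AddEquiv.map_eq_zero_iff]
    exact QuotientAddGroup.eq_zero_iff x
  -- surjectivity of φ₁ and φ₂
  have hmk1 : Surjective (fun a : F₁ => mk (a, 0)) := by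
    intro y
    obtain ⟨x, rfl⟩ := QuotientAddGroup.mk'_surjective K y
    have hx2 : x.2 ∈ K.map (AddMonoidHom.snd F₁ F₂) := by rw [hsnd]; trivial
    obtain ⟨z, hz, hz2⟩ := hx2
    refine ⟨x.1 - z.1, ?_⟩
    show mk (x.1 - z.1, 0) = mk x
    rw [QuotientAddGroup.mk'_eq_mk']
    exact ⟨z, hz, by rw [Prod.ext_iff]; constructor <;> simp [show z.2 = x.2 from hz2]⟩
  have hmk2 : Surjective (fun b : F₂ => mk (0, b)) := by
    intro y
    obtain ⟨x, rfl⟩ := QuotientAddGroup.mk'_surjective K y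
    have hx1 : x.1 ∈ K.map (AddMonoidHom.fst F₁ F₂) := by rw [hfst]; trivial
    obtain ⟨z, hz, hz1⟩ := hx1
    refine ⟨x.2 - z.2, ?_⟩
    show mk (0, x.2 - z.2) = mk x
    rw [QuotientAddGroup.mk'_eq_mk']
    exact ⟨z, hz, by rw [Prod.ext_iff]; constructor <;> simp [show z.1 = x.1 from hz1]⟩
  refine ⟨φ₁, φ₂, ?_, ?_, hker⟩
  · intro g
    obtain ⟨y, hy⟩ := e.surjective g
    obtain ⟨a, ha⟩ := hmk1 y
    exact ⟨a, by show e (mk (a, 0)) = g; rw [show mk (a,0) = y from ha, hy]⟩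
  · intro g
    obtain ⟨y, hy⟩ := e.surjective (-g)
    obtain ⟨b, hb⟩ := hmk2 y
    refine ⟨b, ?_⟩
    show -(e (mk (0, b))) = g
    rw [show mk (0,b) = y from hb, hy, neg_neg]
end Stmt13Aux5

namespace Stmt13Aux6
open Stmt13Aux Stmt13Aux5 Function

variable {F₁ F₂ G : Type} [AddCommGroup F₁] [AddCommGroup F₂] [AddCommGroup G]

theorem fiber_equiv_aut (φa : F₁ →+ G) (φb : F₂ →+ G)
    (h1 : Surjective φa) (h2 : Surjective φb) :
    Nonempty ((G ≃+ G) ≃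
      {φ : {f : F₁ →+ G // Surjective f} × {f : F₂ →+ G // Surjective f} //
        (psi φ.1.1 φ.2.1).ker = (psi φa φb).ker}) := by
  refine ⟨Equiv.ofBijective (fun σ =>
    ⟨(⟨σ.toAddMonoidHom.comp φa, σ.surjective.comp h1⟩,
      ⟨σ.toAddMonoidHom.comp φb, σ.surjective.comp h2⟩), by
        rw [psi_comp, ker_comp_equiv]⟩) ⟨?_, ?_⟩⟩
  · intro σ σ' hσ
    have h := congrArg (fun z => (z.1.1.1 : F₁ →+ G)) hσ
    simp only at h
    ext g
    obtain ⟨a, rfl⟩ := h1 g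
    exact congrArg (fun f : F₁ →+ G => f a) h
  · rintro ⟨⟨⟨φ₁, hs1⟩, ⟨φ₂, hs2⟩⟩, hk⟩
    obtain ⟨σ, hσ⟩ := exists_sigma φa φb φ₁ φ₂ h1 hs1 hk.symm
    refine ⟨σ, ?_⟩
    have e1 : σ.toAddMonoidHom.comp φa = φ₁ := by
      ext a
      have := hσ (a, 0)
      simpa [psi_apply] using this
    have e2 : σ.toAddMonoidHom.comp φb = φ₂ := by
      ext b
      have := hσ (0, b)
      simp only [psi_apply, map_zero, zero_sub, map_neg, neg_inj] at this
      exact this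
    apply Subtype.ext
    simp only
    exact Prod.ext (Subtype.ext e1) (Subtype.ext e2)
end Stmt13Aux6

open Stmt13Aux Stmt13Aux2 Stmt13Aux3 Stmt13Aux4 Stmt13Aux5 Stmt13Aux6 Function in
/-- for finite abelian `p`-groups `F₁`, `F₂`, the number of subgroups of
`F₁ × F₂` projecting surjectively onto both factors equals
`Σ_{G'} |Sur(F₁,G')|·|Sur(F₂,G')|/|Aut(G')|`, summed over isomorphism classes of finite
abelian `p`-groups `G'`. -/
theorem stmt13 (p : ℕ) [Fact p.Prime] (F₁ F₂ : Type)
    [AddCommGroup F₁] [Finite F₁] (hF₁ : IsAddPGroup p F₁)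
    [AddCommGroup F₂] [Finite F₂] (hF₂ : IsAddPGroup p F₂) :
    (Nat.card {K : AddSubgroup (F₁ × F₂) //
        K.map (AddMonoidHom.fst F₁ F₂) = ⊤ ∧ K.map (AddMonoidHom.snd F₁ F₂) = ⊤} : ℝ) =
    ∑' s : Multiset ℕ+,
      ((Nat.card {f : F₁ →+ Gof p s // Function.Surjective f} : ℝ) *
       (Nat.card {f : F₂ →+ Gof p s // Function.Surjective f} : ℝ)) /
        (Nat.card (Gof p s ≃+ Gof p s) : ℝ) := by
  classical
  have hGf : ∀ s : Multiset ℕ+, Finite (Gof p s) := by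
    intro s
    haveI : ∀ i : Fin s.toList.length, NeZero (p ^ ((s.toList.get i : ℕ+) : ℕ)) :=
      fun i => ⟨pow_ne_zero _ (Fact.out : p.Prime).pos.ne'⟩
    infer_instance
  have hP : IsAddPGroup p (F₁ × F₂) := by
    intro x
    obtain ⟨n₁, h₁⟩ := hF₁ x.1
    obtain ⟨n₂, h₂⟩ := hF₂ x.2
    refine ⟨n₁ + n₂, ?_⟩
    have e1 : p ^ (n₁ + n₂) • x.1 = 0 := by
      rw [add_comm, pow_add, mul_smul, h₁, smul_zero]
    have e2 : p ^ (n₁ + n₂) • x.2 = 0 := by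
      rw [pow_add, mul_smul, h₂, smul_zero]
    exact Prod.ext e1 e2
  set T := {K : AddSubgroup (F₁ × F₂) //
      K.map (AddMonoidHom.fst F₁ F₂) = ⊤ ∧ K.map (AddMonoidHom.snd F₁ F₂) = ⊤} with hTdef
  haveI : Finite T := Subtype.finite
  haveI : Fintype T := Fintype.ofFinite T
  have hQex : ∀ K : T, ∃ s : Multiset ℕ+, Nonempty ((F₁ × F₂) ⧸ K.1 ≃+ Gof p s) := by
    intro K
    have hq : IsAddPGroup p ((F₁ × F₂) ⧸ K.1) := by
      intro x
      obtain ⟨y, rfl⟩ := QuotientAddGroup.mk'_surjective K.1 x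
      obtain ⟨n, hn⟩ := hP y
      exact ⟨n, by rw [← map_nsmul, hn, map_zero]⟩
    exact exists_gof p _ hq
  set cls : T → Multiset ℕ+ := fun K => (hQex K).choose with hclsdef
  have hclsSpec : ∀ K : T, Nonempty ((F₁ × F₂) ⧸ K.1 ≃+ Gof p (cls K)) :=
    fun K => (hQex K).choose_spec
  have hclsUniq : ∀ (K : T) (s : Multiset ℕ+),
      Nonempty ((F₁ × F₂) ⧸ K.1 ≃+ Gof p s) → cls K = s := fun K s hs =>
    gof_injective p ((hclsSpec K).some.symm.trans hs.some)
  have key : ∀ s : Multiset ℕ+,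
      Nat.card {f : F₁ →+ Gof p s // Surjective f} *
        Nat.card {f : F₂ →+ Gof p s // Surjective f} =
      Nat.card {K : T // cls K = s} * Nat.card (Gof p s ≃+ Gof p s) := by
    intro s
    haveI := hGf s
    rw [← Nat.card_prod, ← Nat.card_prod]
    have hsurjψ : ∀ φ : {f : F₁ →+ Gof p s // Surjective f} ×
        {f : F₂ →+ Gof p s // Surjective f}, Surjective (psi φ.1.1 φ.2.1) :=
      fun φ => psi_surj _ _ φ.1.2
    set kmap : {f : F₁ →+ Gof p s // Surjective f} × {f : F₂ →+ Gof p s // Surjective f} →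
        {K : T // cls K = s} := fun φ =>
      ⟨⟨(psi φ.1.1 φ.2.1).ker, psi_map_fst _ _ φ.2.2, psi_map_snd _ _ φ.1.2⟩,
        hclsUniq _ s ⟨QuotientAddGroup.quotientKerEquivOfSurjective _ (hsurjψ φ)⟩⟩ with hkmap
    have hfib : ∀ K : {K : T // cls K = s},
        Nonempty ({x // kmap x = K} ≃ (Gof p s ≃+ Gof p s)) := by
      intro K
      have e : (F₁ × F₂) ⧸ K.1.1 ≃+ Gof p s := by
        have h := (hclsSpec K.1).some
        rwa [K.2] at h
      obtain ⟨φa, φb, h1, h2, hker⟩ := ker_psi_of_quotient K.1.1 e K.1.2.1 K.1.2.2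
      refine ⟨(Equiv.subtypeEquivRight ?_).trans (fiber_equiv_aut φa φb h1 h2).some.symm⟩
      intro φ
      constructor
      · intro h
        have := congrArg (fun z : {K : T // cls K = s} => z.1.1) h
        simp only [hkmap] at this
        rw [this, hker]
      · intro h
        apply Subtype.ext; apply Subtype.ext
        rw [hker] at h
        exact h
    exact Nat.card_congr (((Equiv.sigmaFiberEquiv kmap).symm.trans
      (Equiv.sigmaCongrRight fun K => (hfib K).some)).trans (Equiv.sigmaEquivProd _ _))
  have hterm : ∀ s : Multiset ℕ+,
      ((Nat.card {f : F₁ →+ Gof p s // Surjective f} : ℝ) *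
        (Nat.card {f : F₂ →+ Gof p s // Surjective f} : ℝ)) /
        (Nat.card (Gof p s ≃+ Gof p s) : ℝ) = (Nat.card {K : T // cls K = s} : ℝ) := by
    intro s
    haveI := hGf s
    haveI : Finite (Gof p s ≃+ Gof p s) :=
      Finite.of_injective (fun f => (f : Gof p s → Gof p s)) DFunLike.coe_injective
    have hpos : (0 : ℝ) < (Nat.card (Gof p s ≃+ Gof p s) : ℝ) := by
      exact_mod_cast Nat.card_pos (α := Gof p s ≃+ Gof p s)
    rw [div_eq_iff hpos.ne']
    exact_mod_cast key s
  have htsum : (∑' s : Multiset ℕ+,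
      ((Nat.card {f : F₁ →+ Gof p s // Surjective f} : ℝ) *
        (Nat.card {f : F₂ →+ Gof p s // Surjective f} : ℝ)) /
        (Nat.card (Gof p s ≃+ Gof p s) : ℝ)) =
      ∑' s : Multiset ℕ+, (Nat.card {K : T // cls K = s} : ℝ) := tsum_congr hterm
  rw [htsum]
  set fset := (Finset.univ : Finset T).image cls with hfset
  have hzero : ∀ s ∉ fset, (Nat.card {K : T // cls K = s} : ℝ) = 0 := by
    intro s hs
    haveI : IsEmpty {K : T // cls K = s} := by
      constructor
      intro K
      apply hs
      rw [hfset, ← K.2]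
      exact Finset.mem_image_of_mem cls (Finset.mem_univ K.1)
    rw [Nat.card_of_isEmpty]
    norm_num
  rw [tsum_eq_sum hzero]
  have hcount : Nat.card T = ∑ s ∈ fset, Nat.card {K : T // cls K = s} := by
    rw [Nat.card_eq_fintype_card, ← Finset.card_univ]
    rw [Finset.card_eq_sum_card_fiberwise (f := cls) (t := fset)
      (fun K _ => Finset.mem_image_of_mem cls (Finset.mem_univ K))]
    refine Finset.sum_congr rfl fun s _ => ?_
    rw [Nat.card_eq_fintype_card, Fintype.card_subtype]
  rw [hcount, Nat.cast_sum]
end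
end

section
/- For finite abelian p-groups F₁, F₂, |Hom'(G, F₁ × F₂)| = Σ_K |Sur(G, K)|·|Inj'(K, F₁ × F₂)| / |Aut(K)|, where Hom'(G, F₁ × F₂) is the set of homomorphisms G → F₁ × F₂ that are surjective onto each factor, Inj' similarly denotes injections surjective onto each factor, and the sum is over isomorphism classes of finite abelian p-groups K. -/
noncomputable section

set_option linter.unusedSectionVars false



theorem perm_exists_get_equiv {α : Type*} {l₁ l₂ : List α} (h : l₁.Perm l₂) :
    ∃ σ : Fin l₁.length ≃ Fin l₂.length, ∀ i, l₂.get (σ i) = l₁.get i := by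
  induction h with
  | nil => exact ⟨Equiv.refl _, fun i => i.elim0⟩
  | cons x h ih =>
    obtain ⟨σ, hσ⟩ := ih
    refine ⟨(finSuccEquiv _).trans ((Equiv.optionCongr σ).trans (finSuccEquiv _).symm),
      fun i => ?_⟩
    refine Fin.cases ?_ (fun j => ?_) i
    · simp
    · simpa using hσ j
  | swap x y l =>
    refine ⟨Equiv.swap ⟨0, by simp⟩ ⟨1, by simp⟩, fun i => ?_⟩
    match i with
    | ⟨0, h⟩ => simp [Equiv.swap_apply_def, Fin.ext_iff]
    | ⟨1, h⟩ => simp [Equiv.swap_apply_def, Fin.ext_iff]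
    | ⟨n+2, h⟩ => simp [Equiv.swap_apply_def, Fin.ext_iff]
  | trans h₁ h₂ ih₁ ih₂ =>
    obtain ⟨σ₁, hσ₁⟩ := ih₁
    obtain ⟨σ₂, hσ₂⟩ := ih₂
    exact ⟨σ₁.trans σ₂, fun i => (hσ₂ _).trans (hσ₁ i)⟩

section Unique
variable {p : ℕ} [Fact p.Prime]




lemma card_torsion_zmod (k n : ℕ) :
    Nat.card {y : ZMod (p ^ k) // p ^ n • y = 0} = p ^ min n k := by
  have hp := (Fact.out : p.Prime)
  have hm : (p ^ k) ≠ 0 := pow_ne_zero _ hp.ne_zero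
  haveI : NeZero (p ^ k) := ⟨hm⟩
  set ψ : ZMod (p ^ k) →+ ZMod (p ^ k) :=
    AddMonoidHom.mk' (fun y => p ^ n • y) (fun a b => smul_add _ a b) with hψ
  have hker : Nat.card {y : ZMod (p ^ k) // p ^ n • y = 0} = Nat.card ψ.ker :=
    Nat.card_congr (Equiv.subtypeEquivRight (fun y => by
      simp [AddMonoidHom.mem_ker, hψ]))
  have hrange : ψ.range = AddSubgroup.zmultiples ((p ^ n : ℕ) : ZMod (p ^ k)) := by
    ext y
    constructor
    · rintro ⟨x, rfl⟩
      refine ⟨(x.val : ℤ), ?_⟩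
      show (x.val : ℤ) • ((p ^ n : ℕ) : ZMod (p ^ k)) = p ^ n • x
      simp [natCast_zsmul, nsmul_eq_mul, ZMod.natCast_val, ZMod.cast_id, mul_comm]
    · rintro ⟨z, rfl⟩
      exact ⟨z • 1, by
        show p ^ n • (z • (1 : ZMod (p ^ k))) = z • ((p ^ n : ℕ) : ZMod (p ^ k))
        rw [smul_comm]
        congr 1
        rw [nsmul_eq_mul, mul_one, Nat.cast_pow]⟩
  have hq : Nat.card (ZMod (p ^ k) ⧸ ψ.ker) = Nat.card ψ.range :=
    Nat.card_congr (QuotientAddGroup.quotientKerEquivRange ψ).toEquiv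
  have htot := AddSubgroup.card_eq_card_quotient_mul_card_addSubgroup ψ.ker
  rw [Nat.card_zmod, hq, hrange] at htot
  have hordcard : Nat.card (AddSubgroup.zmultiples ((p ^ n : ℕ) : ZMod (p ^ k)))
      = p ^ k / (p ^ k).gcd (p ^ n) := by
    rw [Nat.card_zmultiples, ZMod.addOrderOf_coe _ hm]
  rw [hordcard] at htot
  have hg : (p ^ k).gcd (p ^ n) = p ^ min n k := by
    rcases le_total n k with h | h
    · rw [min_eq_left h, Nat.gcd_eq_right (pow_dvd_pow p h)]
    · rw [min_eq_right h, Nat.gcd_eq_left (pow_dvd_pow p h)]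
  have hdvd : p ^ min n k ∣ p ^ k := pow_dvd_pow p (min_le_right n k)
  rw [hg] at htot
  have h2 : p ^ k / p ^ min n k ≠ 0 :=
    (Nat.div_ne_zero_iff_of_dvd hdvd).mpr ⟨hm, pow_ne_zero _ hp.ne_zero⟩
  have hcancel : p ^ k / p ^ min n k * p ^ min n k = p ^ k := Nat.div_mul_cancel hdvd
  rw [hker]
  exact Nat.eq_of_mul_eq_mul_left (Nat.pos_of_ne_zero h2) (by rw [← htot, hcancel])

def Sfn (s : Multiset ℕ+) (n : ℕ) : ℕ := (Multiset.map (fun k : ℕ+ => min n (k : ℕ)) s).sum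

lemma card_torsion_gof (s : Multiset ℕ+) (n : ℕ) :
    Nat.card {x : Gof p s // p ^ n • x = 0} = p ^ Sfn s n := by
  have e1 : {x : Gof p s // p ^ n • x = 0} ≃
      ∀ i : Fin s.toList.length, {y : ZMod (p ^ ((s.toList.get i : ℕ+) : ℕ)) // p ^ n • y = 0} :=
    (Equiv.subtypeEquivRight (fun x => by simp [funext_iff])).trans Equiv.subtypePiEquivPi
  rw [Nat.card_congr e1, Nat.card_pi]
  simp_rw [card_torsion_zmod]
  rw [Finset.prod_pow_eq_pow_sum]
  congr 1
  show _ = Sfn s n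
  rw [Sfn]
  rw [show Multiset.map (fun k : ℕ+ => min n (k : ℕ)) s
      = ↑(s.toList.map (fun k : ℕ+ => min n (k : ℕ))) from by
    rw [← Multiset.map_coe, Multiset.coe_toList]]
  rw [Multiset.sum_coe]
  conv_rhs => rw [← List.ofFn_get s.toList]
  rw [List.map_ofFn, List.sum_ofFn]
  rfl

def Nfn (s : Multiset ℕ+) (n : ℕ) : ℕ :=
  (Multiset.filter (fun k : ℕ+ => n ≤ (k : ℕ)) s).card

lemma Sfn_succ (s : Multiset ℕ+) (n : ℕ) : Sfn s (n + 1) = Sfn s n + Nfn s (n + 1) := by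
  induction s using Multiset.induction_on with
  | empty => simp [Sfn, Nfn]
  | cons a s ih =>
    have ha := a.2
    simp only [Sfn, Nfn, Multiset.map_cons, Multiset.sum_cons, Multiset.filter_cons,
      Multiset.card_add] at *
    by_cases h : n + 1 ≤ (a : ℕ) <;> simp [h] at ih ⊢ <;> omega

lemma Nfn_succ_count (s : Multiset ℕ+) (k : ℕ+) :
    Nfn s (k : ℕ) = Nfn s ((k : ℕ) + 1) + s.count k := by
  induction s using Multiset.induction_on with
  | empty => simp [Nfn]
  | cons a s ih =>
    have hak : a = k ↔ ((a : ℕ) = (k : ℕ)) := by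
      constructor
      · rintro rfl; rfl
      · intro h; exact PNat.coe_injective h
    simp only [Nfn, Multiset.filter_cons, Multiset.count_cons, Multiset.card_add,
      Multiset.card_singleton, Multiset.card_zero] at *
    by_cases h1 : (k : ℕ) ≤ (a : ℕ) <;> by_cases h2 : (k : ℕ) + 1 ≤ (a : ℕ)
    · have hne : ¬ k = a := fun h => by rw [h] at h2; omega
      rw [if_pos h1, if_pos h2, if_neg hne]
      omega
    · have heq : k = a := PNat.coe_injective (by omega)
      rw [if_pos h1, if_neg h2, if_pos heq]
      simp only [Multiset.card_singleton, Multiset.card_zero]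
      omega
    · omega
    · have hne : ¬ k = a := fun h => by rw [h] at h1; omega
      rw [if_neg h1, if_neg h2, if_neg hne]
      omega

lemma Sfn_inj {s t : Multiset ℕ+} (h : ∀ n, Sfn s n = Sfn t n) : s = t := by
  have hN : ∀ n, Nfn s (n + 1) = Nfn t (n + 1) := by
    intro n
    have h1 := Sfn_succ s n
    have h2 := Sfn_succ t n
    have h3 := h n
    have h4 := h (n + 1)
    omega
  ext k
  obtain ⟨m, hm⟩ : ∃ m, (k : ℕ) = m + 1 := ⟨k.natPred, k.natPred_add_one.symm⟩
  have c1 := Nfn_succ_count s k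
  have c2 := Nfn_succ_count t k
  have e1 := hN m
  have e2 := hN (m + 1)
  rw [hm] at c1 c2
  omega

lemma card_torsion_congr {A B : Type*} [AddCommGroup A] [AddCommGroup B] (e : A ≃+ B) (c : ℕ) :
    Nat.card {x : A // c • x = 0} = Nat.card {y : B // c • y = 0} :=
  Nat.card_congr (Equiv.subtypeEquiv e.toEquiv (fun x => by
    rw [show e.toEquiv x = e x from rfl, ← map_nsmul, map_eq_zero_iff _ e.injective]))

lemma gof_unique {s t : Multiset ℕ+} (h : Nonempty (Gof p s ≃+ Gof p t)) : s = t := by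
  obtain ⟨e⟩ := h
  refine Sfn_inj (fun n => ?_)
  have h2 := card_torsion_congr e (p ^ n)
  rw [card_torsion_gof, card_torsion_gof] at h2
  exact Nat.pow_right_injective (Fact.out : p.Prime).two_le h2

end Unique


lemma multiset_reindex (ι : Type) [Fintype ι] (v : ι → ℕ+) :
    ∃ σ : Fin (Multiset.map v Finset.univ.val).toList.length ≃ ι,
      ∀ i, v (σ i) = (Multiset.map v Finset.univ.val).toList.get i := by
  classical
  have hperm : (Multiset.map v Finset.univ.val).toList.Perm (Finset.univ.toList.map v) := by
    rw [← Multiset.coe_eq_coe, Multiset.coe_toList, ← Multiset.map_coe, Finset.coe_toList]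
  obtain ⟨σ₁, hσ₁⟩ := perm_exists_get_equiv hperm
  have hlen : (Finset.univ.toList.map v).length = (Finset.univ.toList (α := ι)).length :=
    List.length_map _
  let τ : Fin (Finset.univ.toList (α := ι)).length ≃ ι :=
    List.Nodup.getEquivOfForallMemList _ (Finset.nodup_toList _)
      (fun x => Finset.mem_toList.mpr (Finset.mem_univ x))
  refine ⟨(σ₁.trans (finCongr hlen)).trans τ, fun i => ?_⟩
  have h1 := hσ₁ i
  rw [Equiv.trans_apply, Equiv.trans_apply, ← h1]
  show v (τ (finCongr hlen (σ₁ i))) = _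
  have h2 : τ (finCongr hlen (σ₁ i)) = Finset.univ.toList.get (finCongr hlen (σ₁ i)) := rfl
  rw [h2, List.get_eq_getElem, List.get_eq_getElem, List.getElem_map]
  rfl

lemma gof_equiv_of_pi (p : ℕ) (ι : Type) [Fintype ι] (v : ι → ℕ+) :
    Nonempty ((∀ i : ι, ZMod (p ^ (v i : ℕ))) ≃+ Gof p (Multiset.map v Finset.univ.val)) := by
  obtain ⟨σ, hσ⟩ := multiset_reindex ι v
  exact ⟨((RingEquiv.piCongrLeft (fun i : ι => ZMod (p ^ (v i : ℕ))) σ).symm.trans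
    (RingEquiv.piCongrRight (fun j => ZMod.ringEquivCongr (by rw [hσ j])))).toAddEquiv⟩

lemma isAddPGroup_congr {p : ℕ} {A B : Type*} [AddCommGroup A] [AddCommGroup B]
    (e : A ≃+ B) (hA : IsAddPGroup p A) : IsAddPGroup p B := by
  intro x
  obtain ⟨n, hn⟩ := hA (e.symm x)
  exact ⟨n, by rw [← e.apply_symm_apply x, ← map_nsmul, hn, map_zero]⟩

lemma exists_gof_equiv (p : ℕ) [Fact p.Prime] (A : Type*) [AddCommGroup A] [Finite A]
    (hA : IsAddPGroup p A) : ∃ s : Multiset ℕ+, Nonempty (A ≃+ Gof p s) := by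
  classical
  obtain ⟨ι, hι, q, hq, n, ⟨eq⟩⟩ := AddCommGroup.equiv_directSum_zmod_of_finite A
  let e2 : A ≃+ ∀ i, ZMod (q i ^ n i) := eq.trans (DirectSum.addEquivProd _)
  -- split
  let ι' := {i : ι // n i ≠ 0}
  have hsub : Subsingleton (∀ i : {i : ι // ¬ n i ≠ 0}, ZMod (q i ^ n i)) := by
    constructor
    intro a b
    funext i
    have h1 : (q i ^ n i) = 1 := by rw [not_not.mp i.2, pow_zero]
    exact (ZMod.ringEquivCongr h1).injective (Subsingleton.elim _ _)
  haveI := hsub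
  haveI : Unique (∀ i : {i : ι // ¬ n i ≠ 0}, ZMod (q i ^ n i)) := Unique.mk' _
  let e3 : (∀ i, ZMod (q i ^ n i)) ≃+
      (∀ i : ι', ZMod (q i ^ n i)) × (∀ i : {i : ι // ¬ n i ≠ 0}, ZMod (q i ^ n i)) :=
    { Equiv.piEquivPiSubtypeProd (fun i => n i ≠ 0) (fun i => ZMod (q i ^ n i)) with
      map_add' := fun _ _ => rfl }
  let e4 : A ≃+ (∀ i : ι', ZMod (q i ^ n i)) :=
    (e2.trans e3).trans (AddEquiv.prodUnique)
  -- each prime is p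
  have hqp : ∀ i : ι', q i = p := by
    intro i
    have hpg : IsAddPGroup p (∀ i : ι', ZMod (q i ^ n i)) := isAddPGroup_congr e4 hA
    obtain ⟨m, hm⟩ := hpg (Pi.single i 1)
    have hcomp := congrFun hm i
    rw [Pi.smul_apply, Pi.single_eq_same, Pi.zero_apply, nsmul_eq_mul, mul_one] at hcomp
    haveI : NeZero (q i ^ n i) := ⟨pow_ne_zero _ (hq i).ne_zero⟩
    rw [ZMod.natCast_eq_zero_iff] at hcomp
    have hd : q i ∣ p ^ m := dvd_trans (dvd_pow_self (q i) i.2) hcomp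
    exact (Nat.prime_dvd_prime_iff_eq (hq i) Fact.out).mp ((hq i).dvd_of_dvd_pow hd)
  let v : ι' → ℕ+ := fun i => ⟨n i, Nat.pos_of_ne_zero i.2⟩
  let e5 : (∀ i : ι', ZMod (q i ^ n i)) ≃+ (∀ i : ι', ZMod (p ^ (v i : ℕ))) :=
    (RingEquiv.piCongrRight (fun i => ZMod.ringEquivCongr (by rw [hqp i]; rfl))).toAddEquiv
  obtain ⟨e6⟩ := gof_equiv_of_pi p ι' v
  exact ⟨Multiset.map v Finset.univ.val, ⟨(e4.trans e5).trans e6⟩⟩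


section Inv
variable (p : ℕ) [Fact p.Prime]

def invOf (A : Type*) [AddCommGroup A] [Finite A] (hA : IsAddPGroup p A) : Multiset ℕ+ :=
  (exists_gof_equiv p A hA).choose

lemma invOf_spec (A : Type*) [AddCommGroup A] [Finite A] (hA : IsAddPGroup p A) :
    Nonempty (A ≃+ Gof p (invOf p A hA)) :=
  (exists_gof_equiv p A hA).choose_spec

lemma invOf_eq {A : Type*} [AddCommGroup A] [Finite A] {hA : IsAddPGroup p A}
    {s : Multiset ℕ+} (h : Nonempty (A ≃+ Gof p s)) : invOf p A hA = s :=
  gof_unique ⟨((invOf_spec p A hA).some.symm.trans h.some)⟩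

end Inv

section Main

variable {p : ℕ} [Fact p.Prime] {G F₁ F₂ : Type} [AddCommGroup G] [Finite G]
  [AddCommGroup F₁] [Finite F₁] [AddCommGroup F₂] [Finite F₂]

abbrev Qp {A : Type*} [AddCommGroup A] (f : A →+ F₁ × F₂) : Prop :=
  Function.Surjective ((AddMonoidHom.fst F₁ F₂).comp f) ∧
  Function.Surjective ((AddMonoidHom.snd F₁ F₂).comp f)

lemma Qp_comp {A B : Type*} [AddCommGroup A] [AddCommGroup B] {ι : A →+ F₁ × F₂}
    {π : B →+ A} (hπ : Function.Surjective π) (h : Qp ι) : Qp (ι.comp π) :=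
  ⟨h.1.comp hπ, h.2.comp hπ⟩

lemma Qp_of_range_eq {A B : Type*} [AddCommGroup A] [AddCommGroup B] {ι : A →+ F₁ × F₂}
    {f : B →+ F₁ × F₂} (hr : ι.range = f.range) (h : Qp f) : Qp ι := by
  have key : ∀ (M : Type) (_ : AddCommGroup M) (g : (F₁ × F₂) →+ M),
      Function.Surjective (g.comp f) → Function.Surjective (g.comp ι) := by
    intro M _ g hs m
    obtain ⟨x, hx⟩ := hs m
    have hmem : f x ∈ ι.range := by rw [hr]; exact ⟨x, rfl⟩
    obtain ⟨k, hk⟩ := hmem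
    exact ⟨k, by simpa [hk] using hx⟩
  exact ⟨key _ _ _ h.1, key _ _ _ h.2⟩

lemma isAddPGroup_range (hG : IsAddPGroup p G) (f : G →+ F₁ × F₂) :
    IsAddPGroup p ↥f.range := by
  rintro ⟨x, g, rfl⟩
  obtain ⟨n, hn⟩ := hG g
  exact ⟨n, Subtype.ext (by push_cast; rw [← map_nsmul, hn, map_zero])⟩

def phi (hG : IsAddPGroup p G) (f : G →+ F₁ × F₂) : Multiset ℕ+ :=
  invOf p ↥f.range (isAddPGroup_range hG f)

lemma step1 (hG : IsAddPGroup p G) (s : Multiset ℕ+) :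
    Nat.card {f : G →+ Gof p s // Function.Surjective f} *
      Nat.card {f : Gof p s →+ F₁ × F₂ // Function.Injective f ∧ Qp f} =
    Nat.card {f : {f : G →+ F₁ × F₂ // Qp f} // phi hG f.1 = s} *
      Nat.card (Gof p s ≃+ Gof p s) := by
  classical
  rw [← Nat.card_prod, ← Nat.card_prod]
  refine Nat.card_congr (Equiv.symm ?_)
  have hε : ∀ fp : {f : {f : G →+ F₁ × F₂ // Qp f} // phi hG f.1 = s},
      Nonempty (↥fp.1.1.range ≃+ Gof p s) := fun fp => by
    have h := invOf_spec p ↥fp.1.1.range (isAddPGroup_range hG fp.1.1)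
    rwa [show invOf p ↥fp.1.1.range (isAddPGroup_range hG fp.1.1) = s from fp.2] at h
  let ε : ∀ fp : {f : {f : G →+ F₁ × F₂ // Qp f} // phi hG f.1 = s},
      ↥fp.1.1.range ≃+ Gof p s := fun fp => (hε fp).some
  let T := {f : {f : G →+ F₁ × F₂ // Qp f} // phi hG f.1 = s}
  let πm : (Σ _ : T, (Gof p s ≃+ Gof p s)) → (G →+ Gof p s) := fun x =>
    (x.2.symm.toAddMonoidHom.comp (ε x.1).toAddMonoidHom).comp x.1.1.1.rangeRestrict
  let ιm : (Σ _ : T, (Gof p s ≃+ Gof p s)) → (Gof p s →+ F₁ × F₂) := fun x =>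
    x.1.1.1.range.subtype.comp ((ε x.1).symm.toAddMonoidHom.comp x.2.toAddMonoidHom)
  have hπ : ∀ x, Function.Surjective (πm x) := fun x =>
    (x.2.symm.surjective.comp (ε x.1).surjective).comp x.1.1.1.rangeRestrict_surjective
  have hι : ∀ x, Function.Injective (ιm x) := fun x =>
    x.1.1.1.range.subtype_injective.comp ((ε x.1).symm.injective.comp x.2.injective)
  have hcomp : ∀ x, (ιm x).comp (πm x) = x.1.1.1 := by
    intro x
    refine AddMonoidHom.ext (fun g => ?_)
    show x.1.1.1.range.subtype ((ε x.1).symm (x.2 (x.2.symm ((ε x.1)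
      (x.1.1.1.rangeRestrict g))))) = _
    rw [AddEquiv.apply_symm_apply, AddEquiv.symm_apply_apply]
    rfl
  have hrange : ∀ x, (ιm x).range = x.1.1.1.range := by
    intro x
    ext y
    constructor
    · rintro ⟨k, rfl⟩
      exact ((ε x.1).symm (x.2 k)).2
    · rintro ⟨g, rfl⟩
      refine ⟨x.2.symm ((ε x.1) ⟨x.1.1.1 g, ⟨g, rfl⟩⟩), ?_⟩
      show x.1.1.1.range.subtype ((ε x.1).symm (x.2 (x.2.symm _))) = _
      rw [AddEquiv.apply_symm_apply, AddEquiv.symm_apply_apply]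
      rfl
  have hQι : ∀ x, Qp (ιm x) := fun x => Qp_of_range_eq (hrange x) x.1.1.2
  refine (Equiv.sigmaEquivProd _ _).symm.trans (Equiv.ofBijective
    (fun x => ⟨⟨πm x, hπ x⟩, ⟨ιm x, hι x, hQι x⟩⟩) ⟨?_, ?_⟩)
  · -- injectivity
    rintro ⟨t, a⟩ ⟨t', b⟩ h
    have h1 : πm ⟨t, a⟩ = πm ⟨t', b⟩ := congrArg (fun z => z.1.1) h
    have h2 : ιm ⟨t, a⟩ = ιm ⟨t', b⟩ := congrArg (fun z => z.2.1) h
    have hf : t.1.1 = t'.1.1 := by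
      rw [← hcomp ⟨t, a⟩, ← hcomp ⟨t', b⟩, h1, h2]
    have ht : t = t' := Subtype.ext (Subtype.ext hf)
    subst ht
    have hab : a = b := by
      refine AddEquiv.ext (fun k => ?_)
      have h3 := DFunLike.congr_fun h2 k
      exact (ε t).symm.injective ((AddSubgroup.subtype_injective _) h3)
    rw [hab]
  · -- surjectivity
    rintro ⟨⟨π, hπ0⟩, ⟨ι, hι0, hQι0⟩⟩
    set f : G →+ F₁ × F₂ := ι.comp π with hfdef
    have hQf : Qp f := Qp_comp hπ0 hQι0
    have hrι : ι.range = f.range := by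
      ext y
      constructor
      · rintro ⟨k, rfl⟩
        obtain ⟨g, hg⟩ := hπ0 k
        exact ⟨g, by simp [hfdef, hg]⟩
      · rintro ⟨g, rfl⟩
        exact ⟨π g, rfl⟩
    let e1 : Gof p s ≃+ ↥ι.range := AddMonoidHom.ofInjective hι0
    let e2 : ↥ι.range ≃+ ↥f.range := AddEquiv.addSubgroupCongr hrι
    have hφ : phi hG f = s := invOf_eq p ⟨(e1.trans e2).symm⟩
    let t : T := ⟨⟨f, hQf⟩, hφ⟩
    let a : Gof p s ≃+ Gof p s := (e1.trans e2).trans (ε t)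
    have hcoe : ∀ k, ((e2 (e1 k) : ↥f.range) : F₁ × F₂) = ι k := fun k => by
      rw [show ((e2 (e1 k) : ↥f.range) : F₁ × F₂) = ((e1 k : ↥ι.range) : F₁ × F₂) from rfl]
      exact AddMonoidHom.ofInjective_apply hι0
    have hι2 : ιm ⟨t, a⟩ = ι := by
      refine AddMonoidHom.ext (fun k => ?_)
      show f.range.subtype ((ε t).symm ((ε t) (e2 (e1 k)))) = ι k
      rw [AddEquiv.symm_apply_apply]
      exact hcoe k
    have hπ2 : πm ⟨t, a⟩ = π := by
      refine AddMonoidHom.ext (fun g => ?_)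
      show a.symm ((ε t) (f.rangeRestrict g)) = π g
      rw [AddEquiv.symm_apply_eq]
      show (ε t) (f.rangeRestrict g) = (ε t) (e2 (e1 (π g)))
      refine congrArg (ε t) (Subtype.ext ?_)
      show f g = ((e2 (e1 (π g)) : ↥f.range) : F₁ × F₂)
      rw [hcoe (π g)]
      rfl
    exact ⟨⟨t, a⟩, Prod.ext (Subtype.ext hπ2) (Subtype.ext hι2)⟩

lemma finite_gof (p : ℕ) [Fact p.Prime] (s : Multiset ℕ+) : Finite (Gof p s) := by
  haveI : ∀ i : Fin s.toList.length, NeZero (p ^ ((s.toList.get i : ℕ+) : ℕ)) := fun i =>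
    ⟨pow_ne_zero _ (Fact.out : p.Prime).ne_zero⟩
  infer_instance

end Main

/-- for finite abelian `p`-groups `G`, `F₁`, `F₂`,
`|Hom'(G, F₁×F₂)| = Σ_K |Sur(G,K)|·|Inj'(K, F₁×F₂)|/|Aut(K)|`, where `Hom'` (resp. `Inj'`)
denotes homomorphisms (resp. injective homomorphisms) to `F₁ × F₂` whose compositions with
both projections are surjective, and the sum is over isomorphism classes `K` of finite
abelian `p`-groups. -/
theorem stmt14 (p : ℕ) [Fact p.Prime] (G F₁ F₂ : Type)
    [AddCommGroup G] [Finite G] (hG : IsAddPGroup p G)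
    [AddCommGroup F₁] [Finite F₁] (hF₁ : IsAddPGroup p F₁)
    [AddCommGroup F₂] [Finite F₂] (hF₂ : IsAddPGroup p F₂) :
    (Nat.card {f : G →+ F₁ × F₂ //
        Function.Surjective ((AddMonoidHom.fst F₁ F₂).comp f) ∧
        Function.Surjective ((AddMonoidHom.snd F₁ F₂).comp f)} : ℝ) =
    ∑' s : Multiset ℕ+,
      ((Nat.card {f : G →+ Gof p s // Function.Surjective f} : ℝ) *
       (Nat.card {f : Gof p s →+ F₁ × F₂ // Function.Injective f ∧
          Function.Surjective ((AddMonoidHom.fst F₁ F₂).comp f) ∧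
          Function.Surjective ((AddMonoidHom.snd F₁ F₂).comp f)} : ℝ)) /
        (Nat.card (Gof p s ≃+ Gof p s) : ℝ) := by
  classical
  haveI : Finite (G →+ F₁ × F₂) :=
    Finite.of_injective (fun f => (f : G → F₁ × F₂)) DFunLike.coe_injective
  haveI : Fintype {f : G →+ F₁ × F₂ // Qp f} := Fintype.ofFinite _
  have key : ∀ s : Multiset ℕ+,
      ((Nat.card {f : G →+ Gof p s // Function.Surjective f} : ℝ) *
       (Nat.card {f : Gof p s →+ F₁ × F₂ // Function.Injective f ∧ Qp f} : ℝ)) /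
        (Nat.card (Gof p s ≃+ Gof p s) : ℝ) =
      (Nat.card {f : {f : G →+ F₁ × F₂ // Qp f} // phi hG f.1 = s} : ℝ) := by
    intro s
    haveI := finite_gof p s
    haveI : Finite (Gof p s ≃+ Gof p s) :=
      Finite.of_injective (fun e => (e : Gof p s → Gof p s)) DFunLike.coe_injective
    haveI : Nonempty (Gof p s ≃+ Gof p s) := ⟨AddEquiv.refl _⟩
    have hA : (0:ℝ) < (Nat.card (Gof p s ≃+ Gof p s) : ℝ) := by exact_mod_cast Nat.card_pos
    rw [div_eq_iff hA.ne']
    exact_mod_cast step1 hG s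
  have hsum : ∀ s : Multiset ℕ+,
      (Nat.card {f : {f : G →+ F₁ × F₂ // Qp f} // phi hG f.1 = s} : ℝ) =
      ∑ f : {f : G →+ F₁ × F₂ // Qp f}, if phi hG f.1 = s then (1:ℝ) else 0 := by
    intro s
    rw [Nat.card_eq_fintype_card, Fintype.card_subtype, Finset.card_filter]
    push_cast
    rfl
  calc (Nat.card {f : G →+ F₁ × F₂ // Qp f} : ℝ)
      = ∑ f : {f : G →+ F₁ × F₂ // Qp f}, (1:ℝ) := by
        rw [Nat.card_eq_fintype_card]
        simp
    _ = ∑ f : {f : G →+ F₁ × F₂ // Qp f}, ∑' s : Multiset ℕ+,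
          (if phi hG f.1 = s then (1:ℝ) else 0) := by
        refine Finset.sum_congr rfl (fun f _ => ?_)
        rw [tsum_eq_single (phi hG f.1) (fun b hb => if_neg (fun h => hb (by rw [h])))]
        rw [if_pos rfl]
    _ = ∑' s : Multiset ℕ+, ∑ f : {f : G →+ F₁ × F₂ // Qp f},
          (if phi hG f.1 = s then (1:ℝ) else 0) := by
        refine (Summable.tsum_finsetSum (fun f _ => ?_)).symm
        refine summable_of_ne_finset_zero (s := {phi hG f.1}) (fun b hb => ?_)
        exact if_neg (fun h => by simp [h] at hb)
    _ = ∑' s : Multiset ℕ+,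
        ((Nat.card {f : G →+ Gof p s // Function.Surjective f} : ℝ) *
         (Nat.card {f : Gof p s →+ F₁ × F₂ // Function.Injective f ∧ Qp f} : ℝ)) /
          (Nat.card (Gof p s ≃+ Gof p s) : ℝ) := by
        refine tsum_congr (fun s => ?_)
        rw [key s, hsum s]
end
end
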